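/- arXiv:2201.00721 — 7 statements merged into one kernel-verified Lean document; each statement's English description precedes it below -/
import Mathlib

section
/- Let s be a sign assignment on a finite ranked squared poset P, and let F be a functor from P (viewed as a category) to the category of R-modules. Define the cochain groups C^n = ⊕_{ℓ(x)=n} F(x) and the map d^n given on the summand F(x) by the sum over covering relations x ⋖ x' of (-1)^{s(x,x')} F(x ⋖ x'). Then d^{n+1} ∘ d^n = 0. -/
open Finset

/-!
Fix `x` and `z`. Squaredness pairs each `y` with `x ⋖ y ⋖ z` with the other middle element `y'`
of the same square. Functoriality makes the two composites around the square both equal to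
`F x z`, while the sign assignment gives them opposite signs, so the summands of `y` and `y'`
cancel and the sum vanishes.
-/

theorem ZMod.neg_one_pow_val_add_one {R : Type*} [Monoid R] [HasDistribNeg R] (u : ZMod 2) :
    (-1 : R) ^ (u + 1).val = -(-1 : R) ^ u.val := by
  fin_cases u
  · change (-1 : R) ^ 1 = -(-1 : R) ^ 0
    simp
  · change (-1 : R) ^ 0 = -(-1 : R) ^ 1
    simp

section SquareMate

variable {P : Type*} [PartialOrder P]
  (hsquared : ∀ x y z : P, x ⋖ y → y ⋖ z → ∃! y' : P, y' ≠ y ∧ x ⋖ y' ∧ y' ⋖ z)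

open Classical in
/-- Set to `y` itself unless `x ⋖ y ⋖ z`, so that it is an involution of all of `P`. -/
noncomputable def squareMate (x z y : P) : P :=
  if h : x ⋖ y ∧ y ⋖ z then (hsquared x y z h.1 h.2).choose else y

variable {hsquared} {x y z : P}

theorem squareMate_of_covBy (h : x ⋖ y ∧ y ⋖ z) :
    squareMate hsquared x z y ≠ y ∧ x ⋖ squareMate hsquared x z y ∧
      squareMate hsquared x z y ⋖ z := by
  rw [squareMate, dif_pos h]
  exact (hsquared x y z h.1 h.2).choose_spec.1

theorem squareMate_of_not_covBy (h : ¬(x ⋖ y ∧ y ⋖ z)) : squareMate hsquared x z y = y := by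
  rw [squareMate, dif_neg h]

theorem squareMate_squareMate : squareMate hsquared x z (squareMate hsquared x z y) = y := by
  by_cases h : x ⋖ y ∧ y ⋖ z
  · obtain ⟨hne, hx, hz⟩ := squareMate_of_covBy h
    rw [squareMate, dif_pos ⟨hx, hz⟩]
    exact ((hsquared x _ z hx hz).choose_spec.2 y ⟨hne.symm, h⟩).symm
  · rw [squareMate_of_not_covBy h, squareMate_of_not_covBy h]

end SquareMate

theorem signed_comp_eq_neg_of_sign_add_one {P : Type*} [Preorder P] {R : Type*} [CommRing R]
    {M : P → Type*} [∀ x, AddCommGroup (M x)] [∀ x, Module R (M x)]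
    {F : ∀ x y : P, x ≤ y → (M x →ₗ[R] M y)}
    (hcomp : ∀ (x y z : P) (h1 : x ≤ y) (h2 : y ≤ z),
      (F y z h2).comp (F x y h1) = F x z (h1.trans h2))
    {s : P → P → ZMod 2} {x y y' z : P} (hxy : x ≤ y) (hyz : y ≤ z) (hxy' : x ≤ y')
    (hy'z : y' ≤ z) (hs : s x y' + s y' z = s x y + s y z + 1) :
    (-1 : R) ^ (s x y' + s y' z).val • (F y' z hy'z).comp (F x y' hxy') =
      -((-1 : R) ^ (s x y + s y z).val • (F y z hyz).comp (F x y hxy)) := by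
  rw [hs, ZMod.neg_one_pow_val_add_one, neg_smul, hcomp, hcomp]

/-- For a finite ranked squared poset `P` with a sign assignment `s`, and a
functor `F` from `P` to `R`-modules, the differential of poset homology squares
to zero.  This is the componentwise formulation: for every pair `x, z`, the sum
over all intermediate `y` (with `x ⋖ y ⋖ z`) of the signed composites
`(-1)^{s(x,y)+s(y,z)} F(y ⋖ z) ∘ F(x ⋖ y)` vanishes; equivalently,
`d^{n+1} ∘ d^n = 0` on the cochain groups `C^n = ⊕_{ℓ(x)=n} F(x)`. -/
theorem poset_homology_d_squared_zero
    {P : Type*} [Fintype P] [PartialOrder P]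
    [∀ a b : P, Decidable (a ⋖ b)]
    (ℓ : P → ℕ)
    (hrank : ∀ a b : P, a ⋖ b → ℓ b = ℓ a + 1)
    (hsquared : ∀ x y z : P, x ⋖ y → y ⋖ z →
      ∃! y' : P, y' ≠ y ∧ x ⋖ y' ∧ y' ⋖ z)
    (s : P → P → ZMod 2)
    (hsign : ∀ x y y' z : P, x ⋖ y → y ⋖ z → x ⋖ y' → y' ⋖ z → y ≠ y' →
      s x y + s y z = s x y' + s y' z + 1)
    {R : Type*} [CommRing R]
    (M : P → Type*) [∀ x, AddCommGroup (M x)] [∀ x, Module R (M x)]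
    (F : ∀ x y : P, x ≤ y → (M x →ₗ[R] M y))
    (hid : ∀ x, F x x le_rfl = LinearMap.id)
    (hcomp : ∀ (x y z : P) (h1 : x ≤ y) (h2 : y ≤ z),
      (F y z h2).comp (F x y h1) = F x z (h1.trans h2)) :
    ∀ x z : P,
      (∑ y : P, if h : x ⋖ y ∧ y ⋖ z then
          ((-1 : R) ^ (s x y + s y z).val) • ((F y z h.2.le).comp (F x y h.1.le))
        else 0) = 0 := by
  intro x z
  refine sum_ninvolution (squareMate hsquared x z) (fun y => ?_) (fun y hy => ?_)
    (fun _ => mem_univ _) (fun _ => squareMate_squareMate)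
  · by_cases h : x ⋖ y ∧ y ⋖ z
    · obtain ⟨hne, hx, hz⟩ := squareMate_of_covBy (hsquared := hsquared) h
      rw [dif_pos h, dif_pos ⟨hx, hz⟩, signed_comp_eq_neg_of_sign_add_one hcomp h.1.le h.2.le hx.le hz.le
        (hsign x _ y z hx hz h.1 h.2 hne), add_neg_cancel]
    · rw [squareMate_of_not_covBy h, dif_neg h, add_zero]
  · by_cases h : x ⋖ y ∧ y ⋖ z
    · exact (squareMate_of_covBy h).1
    · exact absurd (dif_neg h) hy
end

section
/- Let G be a finite simple connected graph on n ≥ 3 vertices containing a leaf (a vertex w of degree 1 with unique neighbour v). Then every connected dominating set of G contains v, and the map D ↦ D ∪ {w} is a bijection between connected dominating sets of G not containing w and connected dominating sets of G containing w. Consequently Σ_D (-1)^{|D|} over connected dominating sets D of G equals 0. -/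
/-!
A connected dominating set must reach the leaf `w`, either by containing its neighbour `v` or by
containing `w` together with some other vertex (a third vertex has to be dominated), and then
connectivity forces `v` in as well. Since `v` is always present and the leaf hangs off `v` alone,
adding or removing `w` preserves being a connected dominating set, so `D ↦ D △ {w}` pairs these
sets off with opposite signs.
-/

open Finset

attribute [local instance] Classical.propDecidable

/-- `D` is a connected dominating set of `G`. -/
def ConnDomSet {V : Type*} (G : SimpleGraph V) (D : Finset V) : Prop :=
  D.Nonempty ∧ (G.induce (D : Set V)).Connected ∧
    ∀ v : V, v ∈ D ∨ ∃ u ∈ D, G.Adj u v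

open SimpleGraph

section SignedCount

variable {α : Type*} [DecidableEq α] {P : Finset α → Prop} {w : α}

theorem Finset.bijOn_insert_of_insert_iff (hP : ∀ D, w ∉ D → (P (insert w D) ↔ P D)) :
    Set.BijOn (insert w) {D | P D ∧ w ∉ D} {D | P D ∧ w ∈ D} := by
  refine ⟨fun D ⟨hD, hw⟩ => ⟨(hP D hw).2 hD, mem_insert_self w D⟩, ?_, ?_⟩
  · rintro D₁ ⟨-, hw₁⟩ D₂ ⟨-, hw₂⟩ h
    simpa [erase_insert hw₁, erase_insert hw₂] using congrArg (erase · w) h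
  · rintro D ⟨hD, hw⟩
    refine ⟨D.erase w, ⟨(hP _ (notMem_erase w D)).1 ?_, notMem_erase w D⟩, insert_erase hw⟩
    rwa [insert_erase hw]

theorem Finset.sum_ite_neg_one_pow_card_eq_zero_of_insert_iff [Fintype α] [DecidablePred P]
    (hP : ∀ D, w ∉ D → (P (insert w D) ↔ P D)) :
    (∑ D : Finset α, if P D then (-1 : ℤ) ^ D.card else 0) = 0 := by
  rw [← powerset_univ, ← insert_erase (mem_univ w),
    sum_powerset_insert (notMem_erase w univ), ← sum_add_distrib]
  refine sum_eq_zero fun D hD => ?_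
  have hw : w ∉ D := fun h => notMem_erase w univ (mem_powerset.1 hD h)
  simp only [hP D hw, card_insert_of_notMem hw]
  split_ifs <;> ring

end SignedCount

theorem SimpleGraph.Preconnected.induce_inter_of_subsingleton_neighborSet {V : Type*}
    {G : SimpleGraph V} {s t : Set V} (hs : (G.induce s).Preconnected)
    (ht : ∀ x ∈ s, x ∉ t → (G.neighborSet x).Subsingleton) :
    (G.induce (s ∩ t)).Preconnected := by
  have hpre := hs.induce_of_degree_eq_one (s := {x | x.1 ∈ t}) fun x hx _ ha _ hb =>
    Subtype.ext (ht x x.2 hx ha hb)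
  let f : (G.induce s).induce {x | x.1 ∈ t} →g G.induce (s ∩ t) :=
    { toFun x := ⟨x.1.1, x.1.2, x.2⟩, map_rel' h := h }
  exact hpre.map f fun x => ⟨⟨⟨x.1, x.2.1⟩, x.2.2⟩, rfl⟩

namespace ConnDomSet

variable {V : Type*} {G : SimpleGraph V} {D : Finset V} {v w : V}

theorem mem_of_unique_adj (hD : ConnDomSet G D) (huniq : ∀ u, G.Adj u w → u = v) {x : V}
    (hxv : x ≠ v) (hxw : x ≠ w) : v ∈ D := by
  obtain ⟨-, hconn, hdom⟩ := hD
  rcases hdom w with hw | ⟨u, hu, huw⟩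
  · obtain ⟨y, hy, hyw⟩ : ∃ y ∈ D, y ≠ w := by
      rcases hdom x with hx | ⟨u, hu, hux⟩
      · exact ⟨x, hx, hxw⟩
      · exact ⟨u, hu, fun h => hxv (huniq x (h ▸ hux).symm)⟩
    have : Nontrivial (D : Set V) := ⟨⟨w, hw⟩, ⟨y, hy⟩, fun h => hyw (congrArg Subtype.val h).symm⟩
    obtain ⟨u, hwu⟩ := hconn.preconnected.exists_adj_of_nontrivial ⟨w, hw⟩
    simpa [huniq u hwu.symm] using u.2
  · exact huniq u huw ▸ hu

variable [DecidableEq V]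

theorem insert_of_adj (hD : ConnDomSet G D) (hv : v ∈ D) (hvw : G.Adj v w) :
    ConnDomSet G (insert w D) := by
  obtain ⟨-, hconn, hdom⟩ := hD
  refine ⟨insert_nonempty w D, ?_, fun x => ?_⟩
  · rw [coe_insert, Set.insert_eq, Set.union_comm]
    exact connected_induce_union hconn.preconnected (by simp) (mem_coe.2 hv) rfl hvw
  · rcases hdom x with hx | ⟨u, hu, hux⟩
    · exact .inl (mem_insert_of_mem hx)
    · exact .inr ⟨u, mem_insert_of_mem hu, hux⟩

theorem erase_of_unique_adj (hD : ConnDomSet G D) (huniq : ∀ u, G.Adj u w → u = v) (hv : v ∈ D)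
    (hvw : G.Adj v w) :
    ConnDomSet G (D.erase w) := by
  obtain ⟨-, hconn, hdom⟩ := hD
  have hv' : v ∈ D.erase w := mem_erase.2 ⟨hvw.ne, hv⟩
  refine ⟨⟨v, hv'⟩, ?_, fun x => ?_⟩
  · rw [connected_iff, coe_erase, Set.sdiff_eq]
    refine ⟨hconn.preconnected.induce_inter_of_subsingleton_neighborSet ?_, ⟨v, hv, hvw.ne⟩⟩
    rintro x - hx a ha b hb
    obtain rfl : x = w := by simpa using hx
    exact (huniq a ha.symm).trans (huniq b hb.symm).symm
  · by_cases hxw : x = w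
    · exact .inr ⟨v, hv', hxw ▸ hvw⟩
    rcases hdom x with hx | ⟨u, hu, hux⟩
    · exact .inl (mem_erase.2 ⟨hxw, hx⟩)
    by_cases huw : u = w
    · obtain rfl : x = v := huniq x (huw ▸ hux).symm
      exact .inl hv'
    · exact .inr ⟨u, mem_erase.2 ⟨huw, hu⟩, hux⟩

end ConnDomSet

theorem leaf_implies_signed_count_zero_general
    {V : Type*} [Fintype V] [DecidableEq V] (G : SimpleGraph V)
    (hcard : 3 ≤ Fintype.card V)
    (v w : V) (hadj : G.Adj v w)
    (huniq : ∀ u : V, G.Adj u w → u = v) :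
    (∀ D : Finset V, ConnDomSet G D → v ∈ D) ∧
    Set.BijOn (fun D => insert w D)
      {D : Finset V | ConnDomSet G D ∧ w ∉ D}
      {D : Finset V | ConnDomSet G D ∧ w ∈ D} ∧
    (∑ D : Finset V, if ConnDomSet G D then (-1 : ℤ) ^ D.card else 0) = 0 := by
  obtain ⟨x, -, hx⟩ : ∃ x ∈ univ, x ∉ ({v, w} : Finset V) :=
    exists_mem_notMem_of_card_lt_card (card_le_two.trans_lt (by rwa [card_univ]))
  simp only [mem_insert, mem_singleton, not_or] at hx
  have hmem (D : Finset V) (hD : ConnDomSet G D) : v ∈ D := hD.mem_of_unique_adj huniq hx.1 hx.2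
  have hinsert (D : Finset V) (hw : w ∉ D) : ConnDomSet G (insert w D) ↔ ConnDomSet G D :=
    ⟨fun hD => by simpa [erase_insert hw] using hD.erase_of_unique_adj huniq (hmem _ hD) hadj,
      fun hD => hD.insert_of_adj (hmem D hD) hadj⟩
  exact ⟨hmem, bijOn_insert_of_insert_iff hinsert,
    sum_ite_neg_one_pow_card_eq_zero_of_insert_iff hinsert⟩

/-- If a finite simple connected graph `G` on at least `3` vertices has a leaf
`w` (a vertex of degree `1` with unique neighbour `v`), then every connected
dominating set contains `v`, the map `D ↦ D ∪ {w}` is a bijection between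
connected dominating sets avoiding `w` and those containing `w`, and the signed
count of connected dominating sets vanishes. -/
theorem leaf_implies_signed_count_zero
    {V : Type*} [Fintype V] [DecidableEq V] (G : SimpleGraph V)
    (hconn : G.Connected) (hcard : 3 ≤ Fintype.card V)
    (v w : V) (hadj : G.Adj v w)
    (huniq : ∀ u : V, G.Adj u w → u = v) :
    (∀ D : Finset V, ConnDomSet G D → v ∈ D) ∧
    Set.BijOn (fun D => insert w D)
      {D : Finset V | ConnDomSet G D ∧ w ∉ D}
      {D : Finset V | ConnDomSet G D ∧ w ∈ D} ∧
    (∑ D : Finset V, if ConnDomSet G D then (-1 : ℤ) ^ D.card else 0) = 0 :=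
  leaf_implies_signed_count_zero_general G hcard v w hadj huniq
end

section
/- Let G be a finite simple connected graph and Cone(G) the graph obtained by adding a new vertex v̂ adjacent to every vertex of G. Then a subset D ⊆ V(Cone(G)) is a connected dominating set of Cone(G) if and only if either v̂ ∈ D, or v̂ ∉ D and D is a connected dominating set of G. Consequently Σ_D (-1)^{|D|} over connected dominating sets D of Cone(G) equals Σ_{D'} (-1)^{|D'|} over connected dominating sets D' of G, i.e. D^c_{Cone(G)}(-1) = D^c_G(-1). -/
open Finset

attribute [local instance] Classical.propDecidable

/-- The graph cone over `G`: a new vertex (`none`) is joined to all vertices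
of `G`. -/
def coneGraph {V : Type*} (G : SimpleGraph V) : SimpleGraph (Option V) :=
  SimpleGraph.fromRel (fun a b =>
    match a, b with
    | some a, some b => G.Adj a b
    | none, some _ => True
    | _, _ => False)

lemma cone_adj_some_some {V : Type*} (G : SimpleGraph V) {u v : V} :
    (coneGraph G).Adj (some u) (some v) ↔ G.Adj u v := by
  constructor
  · rintro ⟨-, h | h⟩
    · exact h
    · exact h.symm
  · intro h
    exact ⟨by simpa using h.ne, Or.inl h⟩

lemma cone_adj_none_some {V : Type*} (G : SimpleGraph V) (v : V) :
    (coneGraph G).Adj none (some v) :=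
  ⟨by simp, Or.inl trivial⟩

/-- The induced subgraph of the cone on a set of `some`-vertices is isomorphic
to the corresponding induced subgraph of `G`. -/
noncomputable def coneInduceIso {V : Type*} (G : SimpleGraph V) (D₀ : Finset V) :
    G.induce (↑D₀ : Set V) ≃g
      (coneGraph G).induce (↑(D₀.map Function.Embedding.some) : Set (Option V)) := by
  have hmem : ∀ x : Option V,
      x ∈ (↑(D₀.map Function.Embedding.some) : Set (Option V)) ↔ ∃ a ∈ D₀, some a = x := by
    intro x; simp
  refine ⟨Equiv.ofBijective
    (fun a => ⟨some a.1, by rw [hmem]; exact ⟨a.1, a.2, rfl⟩⟩) ⟨?_, ?_⟩, ?_⟩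
  · intro a b hab
    apply Subtype.ext
    have := congrArg Subtype.val hab
    simpa using this
  · rintro ⟨x, hx⟩
    obtain ⟨a, ha, rfl⟩ := (hmem x).mp hx
    exact ⟨⟨a, ha⟩, rfl⟩
  · intro a b
    exact cone_adj_some_some G

lemma cone_induce_connected_iff {V : Type*} (G : SimpleGraph V) (D₀ : Finset V) :
    ((coneGraph G).induce
        (↑(D₀.map Function.Embedding.some) : Set (Option V))).Connected ↔
      (G.induce (↑D₀ : Set V)).Connected :=
  (coneInduceIso G D₀).connected_iff.symm

lemma cone_cds_iff {V : Type*} (G : SimpleGraph V)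
    (D : Finset (Option V)) : ConnDomSet (coneGraph G) D ↔
      (none ∈ D ∨ (none ∉ D ∧ ∃ D₀ : Finset V,
        D = D₀.map Function.Embedding.some ∧ ConnDomSet G D₀)) := by
  classical
  constructor
  · rintro ⟨hne, hc, hdom⟩
    by_cases h : none ∈ D
    · exact Or.inl h
    · refine Or.inr ⟨h, D.eraseNone, ?_, ?_, ?_, ?_⟩
      · rw [Finset.map_some_eraseNone, Finset.erase_eq_self.mpr h]
      · obtain ⟨x, hx⟩ := hne
        match x with
        | none => exact absurd hx h
        | some a => exact ⟨a, Finset.mem_eraseNone.mpr hx⟩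
      · rw [← cone_induce_connected_iff]
        have : (D.eraseNone.map Function.Embedding.some) = D := by
          rw [Finset.map_some_eraseNone, Finset.erase_eq_self.mpr h]
        rw [this]; exact hc
      · intro v
        rcases hdom (some v) with hv | ⟨u, hu, hadj⟩
        · exact Or.inl (Finset.mem_eraseNone.mpr hv)
        · match u with
          | none => exact absurd hu h
          | some w =>
            exact Or.inr ⟨w, Finset.mem_eraseNone.mpr hu,
              (cone_adj_some_some G).mp hadj⟩
  · rintro (h | ⟨h, D₀, rfl, hne₀, hc₀, hdom₀⟩)
    · refine ⟨⟨none, h⟩, ?_, ?_⟩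
      · have hreach : ∀ x (hx : x ∈ (↑D : Set (Option V))),
            ((coneGraph G).induce (↑D : Set (Option V))).Reachable ⟨x, hx⟩ ⟨none, h⟩ := by
          intro x hx
          match x with
          | none => exact SimpleGraph.Reachable.refl _
          | some a =>
            exact SimpleGraph.Adj.reachable
              (show (coneGraph G).Adj (some a) none from (cone_adj_none_some G a).symm)
        rw [SimpleGraph.connected_iff]
        exact ⟨fun x y => (hreach x.1 x.2).trans (hreach y.1 y.2).symm, ⟨⟨none, h⟩⟩⟩
      · intro v
        match v with
        | none => exact Or.inl h
        | some a => exact Or.inr ⟨none, h, cone_adj_none_some G a⟩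
    · refine ⟨hne₀.map, (cone_induce_connected_iff G D₀).mpr hc₀, ?_⟩
      intro v
      match v with
      | none =>
        obtain ⟨u, hu⟩ := hne₀
        exact Or.inr ⟨some u, Finset.mem_map_of_mem _ hu, (cone_adj_none_some G u).symm⟩
      | some a =>
        rcases hdom₀ a with ha | ⟨u, hu, hadj⟩
        · exact Or.inl (by simpa using ha)
        · exact Or.inr ⟨some u, Finset.mem_map_of_mem _ hu,
            (cone_adj_some_some G).mpr hadj⟩

/-- A subset of `V(Cone(G))` is a connected dominating set iff it contains the
apex, or avoids the apex and corresponds to a connected dominating set of `G`.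
Consequently `D^c_{Cone(G)}(-1) = D^c_G(-1)`. -/
theorem cone_connected_dominating
    {V : Type*} [Fintype V] [DecidableEq V] (G : SimpleGraph V)
    (hconn : G.Connected) :
    (∀ D : Finset (Option V), ConnDomSet (coneGraph G) D ↔
      (none ∈ D ∨ (none ∉ D ∧ ∃ D₀ : Finset V,
        D = D₀.map Function.Embedding.some ∧ ConnDomSet G D₀))) ∧
    (∑ D : Finset (Option V),
        if ConnDomSet (coneGraph G) D then (-1 : ℤ) ^ D.card else 0) =
      ∑ D : Finset V, if ConnDomSet G D then (-1 : ℤ) ^ D.card else 0 := by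
  classical
  refine ⟨cone_cds_iff G, ?_⟩
  have hV : Nonempty V := hconn.nonempty
  rw [← Finset.sum_filter_add_sum_filter_not Finset.univ (fun D => none ∈ D)]
  have h1 : (∑ D ∈ Finset.univ.filter (fun D : Finset (Option V) => none ∈ D),
      if ConnDomSet (coneGraph G) D then (-1 : ℤ) ^ D.card else 0) = 0 := by
    have : (∑ D ∈ Finset.univ.filter (fun D : Finset (Option V) => none ∈ D),
        if ConnDomSet (coneGraph G) D then (-1 : ℤ) ^ D.card else 0) =
        ∑ D₀ : Finset V, (-1 : ℤ) ^ (D₀.card + 1) := by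
      refine Finset.sum_nbij' (fun D => D.eraseNone)
        (fun D₀ => Finset.insertNone D₀) ?_ ?_ ?_ ?_ ?_
      · intro D hD; exact Finset.mem_univ _
      · intro D₀ hD₀
        simp [Finset.mem_filter, Finset.none_mem_insertNone]
      · intro D hD
        have hmem : none ∈ D := (Finset.mem_filter.mp hD).2
        ext (_ | x) <;> simp [hmem]
      · intro D₀ hD₀
        ext x; simp
      · intro D hD
        have hmem : none ∈ D := (Finset.mem_filter.mp hD).2
        have hcds : ConnDomSet (coneGraph G) D := (cone_cds_iff G D).mpr (Or.inl hmem)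
        have : D = Finset.insertNone D.eraseNone := by ext (_ | x) <;> simp [hmem]
        have hcard : D.card = D.eraseNone.card + 1 := by
          conv_lhs => rw [this]
          exact Finset.card_insertNone _
        rw [if_pos hcds, hcard]
    rw [this]
    have := Finset.sum_powerset_neg_one_pow_card_of_nonempty
      (x := (Finset.univ : Finset V)) Finset.univ_nonempty
    rw [Finset.powerset_univ] at this
    calc (∑ D₀ : Finset V, (-1 : ℤ) ^ (D₀.card + 1))
        = -∑ D₀ : Finset V, (-1 : ℤ) ^ D₀.card := by
          rw [← Finset.sum_neg_distrib]
          exact Finset.sum_congr rfl fun D₀ _ => by ring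
      _ = 0 := by rw [this, neg_zero]
  have h2 : (∑ D ∈ Finset.univ.filter (fun D : Finset (Option V) => ¬ none ∈ D),
      if ConnDomSet (coneGraph G) D then (-1 : ℤ) ^ D.card else 0) =
      ∑ D : Finset V, if ConnDomSet G D then (-1 : ℤ) ^ D.card else 0 := by
    refine Finset.sum_nbij' (fun D => D.eraseNone)
      (fun D₀ => D₀.map Function.Embedding.some) ?_ ?_ ?_ ?_ ?_
    · intro D hD; exact Finset.mem_univ _
    · intro D₀ hD₀
      simp [Finset.mem_filter]
    · intro D hD
      have hmem : none ∉ D := (Finset.mem_filter.mp hD).2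
      show Finset.map Function.Embedding.some D.eraseNone = D
      rw [Finset.map_some_eraseNone, Finset.erase_eq_self.mpr hmem]
    · intro D₀ hD₀
      exact Finset.eraseNone_map_some D₀
    · intro D hD
      have hmem : none ∉ D := (Finset.mem_filter.mp hD).2
      have hDeq : D = D.eraseNone.map Function.Embedding.some := by
        rw [Finset.map_some_eraseNone, Finset.erase_eq_self.mpr hmem]
      have hiff : ConnDomSet (coneGraph G) D ↔ ConnDomSet G D.eraseNone := by
        rw [cone_cds_iff]
        constructor
        · rintro (h | ⟨-, D₀, rfl, hcds⟩)
          · exact absurd h hmem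
          · rwa [Finset.eraseNone_map_some]
        · intro h
          exact Or.inr ⟨hmem, D.eraseNone, hDeq, h⟩
      have hcard : D.card = D.eraseNone.card := by
        conv_lhs => rw [hDeq]
        rw [Finset.card_map]
      rw [hcard]
      by_cases h : ConnDomSet G D.eraseNone
      · rw [if_pos (hiff.mpr h), if_pos h]
      · rw [if_neg (fun hc => h (hiff.mp hc)), if_neg h]
  rw [h1, h2, zero_add]
end

section
/- In the cycle graph C_n on n ≥ 4 vertices, a subset D ⊆ V(C_n) is a connected dominating set if and only if |D| ≥ n-2 and the induced subgraph is connected; explicitly, the connected dominating sets are all sets of n-2 consecutive vertices, all sets of n-1 vertices, and V(C_n) itself. Consequently the number of connected dominating sets of size n-2 is n, of size n-1 is n, and of size n is 1, so D^c_{C_n}(-1) = (-1)^n. -/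
open Finset

attribute [local instance] Classical.propDecidable

/-- The cycle graph `C_n` on `ZMod n`, with `i` adjacent to `i ± 1`. -/
def cycleGraph (n : ℕ) : SimpleGraph (ZMod n) :=
  SimpleGraph.fromRel (fun i j => i = j + 1)

section CDS

variable {n : ℕ} [NeZero n]

lemma cyc_adj (u v : ZMod n) : (cycleGraph n).Adj u v ↔ u ≠ v ∧ (u = v + 1 ∨ v = u + 1) := by
  simp [cycleGraph, SimpleGraph.fromRel_adj]

/-- the "unrolled position" of x relative to a -/
def vl (a x : ZMod n) : ℕ := (x - a).val

lemma vl_lt (a x : ZMod n) : vl a x < n := ZMod.val_lt _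

lemma add_vl (a x : ZMod n) : a + (vl a x : ℕ) = x := by
  have := ZMod.natCast_rightInverse (n := n) (x - a)
  simp only [vl, this]; ring

lemma vl_inj {a x y : ZMod n} (h : vl a x = vl a y) : x = y := by
  have := congrArg (fun t : ℕ => a + (t : ZMod n)) h
  simpa [add_vl] using this

lemma vl_add_cast (a : ZMod n) (t : ℕ) (ht : t < n) : vl a (a + t) = t := by
  simp [vl, ZMod.val_cast_of_lt ht]

lemma vl_eq_zero_iff (a x : ZMod n) : vl a x = 0 ↔ x = a := by
  rw [vl, ZMod.val_eq_zero, sub_eq_zero]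

end CDS

section CDS2

set_option linter.unusedSectionVars false

variable {n : ℕ} [NeZero n]

lemma vl_step (hn : 4 ≤ n) {a x y : ZMod n} (hx : x ≠ a) (hy : y ≠ a)
    (hadj : (cycleGraph n).Adj x y) :
    vl a y = vl a x + 1 ∨ vl a x = vl a y + 1 := by
  have key : ∀ u v : ZMod n, u ≠ a → v ≠ a → v = u + 1 → vl a v = vl a u + 1 := by
    intro u v hu hv huv
    have hs : ((vl a u : ℕ) : ZMod n) = u - a := ZMod.natCast_rightInverse _
    have h2 : v - a = ((vl a u + 1 : ℕ) : ZMod n) := by push_cast; rw [hs, huv]; ring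
    have hlt : vl a u < n := vl_lt a u
    rcases lt_or_eq_of_le (Nat.succ_le_of_lt hlt) with h | h
    · rw [vl, h2, ZMod.val_cast_of_lt h]
    · exfalso
      apply hv
      have : v - a = 0 := by rw [h2, show vl a u + 1 = n by omega]; simp
      rwa [sub_eq_zero] at this
  rw [cyc_adj] at hadj
  rcases hadj.2 with h | h
  · right; exact key y x hy hx h
  · left; exact key x y hx hy h

lemma ivt {D : Finset (ZMod n)} {a : ZMod n} (ha : a ∉ D) (hn : 4 ≤ n) :
    ∀ {x y : ((D : Set (ZMod n)) : Type _)}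
      (_ : ((cycleGraph n).induce (D : Set (ZMod n))).Walk x y) (t : ℕ),
      vl a (x : ZMod n) ≤ t → t ≤ vl a (y : ZMod n) → ∃ z ∈ D, vl a z = t := by
  intro x y w
  induction w with
  | nil =>
    rename_i u
    intro t h1 h2
    exact ⟨(u : ZMod n), by exact_mod_cast u.prop, by omega⟩
  | @cons u v y hadj p ih =>
    intro t h1 h2
    have hu : (u : ZMod n) ∈ D := u.prop
    have hv : (v : ZMod n) ∈ D := v.prop
    have hadj' : (cycleGraph n).Adj u v := hadj
    have hune : (u : ZMod n) ≠ a := fun h => ha (h ▸ hu)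
    have hvne : (v : ZMod n) ≠ a := fun h => ha (h ▸ hv)
    rcases vl_step hn hune hvne hadj' with h | h
    · rcases eq_or_lt_of_le h1 with h' | h'
      · exact ⟨u, hu, h'⟩
      · exact ih t (by omega) h2
    · exact ih t (by omega) h2

end CDS2

section CDS3
set_option linter.unusedSectionVars false
variable {n : ℕ} [NeZero n]

lemma zmod_one_ne_zero (hn : 4 ≤ n) : (1 : ZMod n) ≠ 0 := by
  haveI : Fact (1 < n) := ⟨by omega⟩
  exact one_ne_zero

lemma structure_lemma (hn : 4 ≤ n) {D : Finset (ZMod n)} (hne : D.Nonempty)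
    (hc : ((cycleGraph n).induce (D : Set (ZMod n))).Connected)
    {a : ZMod n} (ha : a ∉ D) :
    ∃ m M : ℕ, 1 ≤ m ∧ m ≤ M ∧ M ≤ n - 1 ∧
      ∀ x : ZMod n, x ∈ D ↔ (m ≤ vl a x ∧ vl a x ≤ M) := by
  have hSne : (D.image (vl a)).Nonempty := hne.image _
  set S := D.image (vl a) with hS
  obtain ⟨xm, hxm, hxmv⟩ := Finset.mem_image.mp (S.min'_mem hSne)
  obtain ⟨xM, hxM, hxMv⟩ := Finset.mem_image.mp (S.max'_mem hSne)
  refine ⟨S.min' hSne, S.max' hSne, ?_, ?_, ?_, ?_⟩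
  · rw [← hxmv]
    have : xm ≠ a := fun h => ha (h ▸ hxm)
    have := (vl_eq_zero_iff a xm).not.mpr this
    omega
  · exact S.min'_le _ (S.max'_mem hSne)
  · rw [← hxMv]
    have := vl_lt a xM
    omega
  · intro x
    constructor
    · intro hx
      exact ⟨S.min'_le _ (Finset.mem_image_of_mem _ hx),
             S.le_max' _ (Finset.mem_image_of_mem _ hx)⟩
    · rintro ⟨h1, h2⟩
      obtain ⟨w⟩ := hc.preconnected ⟨xm, by simpa using hxm⟩ ⟨xM, by simpa using hxM⟩
      obtain ⟨z, hz, hzv⟩ := ivt ha hn w (vl a x) (by simpa [hxmv] using h1)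
        (by simpa [hxMv] using h2)
      rwa [vl_inj hzv] at hz

lemma arc_connected (hn : 4 ≤ n) (a : ZMod n) {k : ℕ} (hk1 : 1 ≤ k) (hkn : k ≤ n)
    {D : Finset (ZMod n)} (hD : ∀ x, x ∈ D ↔ vl a x < k) :
    ((cycleGraph n).induce (D : Set (ZMod n))).Connected := by
  have haD : a ∈ D := by rw [hD]; simpa [vl] using (show 0 < k by omega)
  have hmem : ∀ t : ℕ, t < k → a + (t : ZMod n) ∈ D := fun t ht => by
    rw [hD, vl_add_cast a t (lt_of_lt_of_le ht hkn)]; exact ht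
  have key : ∀ t : ℕ, (ht : t < k) → ((cycleGraph n).induce (D : Set (ZMod n))).Reachable
      ⟨a, by simpa using haD⟩ ⟨a + (t : ZMod n), by simpa using hmem t ht⟩ := by
    intro t
    induction t with
    | zero =>
      intro h
      have : (⟨a + ((0:ℕ) : ZMod n), by simpa using hmem 0 h⟩ :
          (D : Set (ZMod n))) = ⟨a, by simpa using haD⟩ := by
        apply Subtype.ext; simp
      rw [this]
    | succ t ih =>
      intro h
      have h' : t < k := by omega
      refine (ih h').trans (SimpleGraph.Adj.reachable ?_)
      have hadj : (cycleGraph n).Adj (a + (t : ZMod n)) (a + ((t+1 : ℕ) : ZMod n)) := by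
        rw [cyc_adj]
        constructor
        · intro heq
          apply zmod_one_ne_zero hn
          have : a + ((t:ZMod n) + 1) = a + ((t:ZMod n) + 0) := by push_cast at heq ⊢; rw [← heq]; ring
          have := add_left_cancel this
          have := add_left_cancel this
          exact this
        · right; push_cast; ring
      exact hadj
  rw [SimpleGraph.connected_iff]
  refine ⟨?_, ⟨⟨a, by simpa using haD⟩⟩⟩
  intro x y
  have hx : (x : ZMod n) ∈ D := by exact_mod_cast x.prop
  have hy : (y : ZMod n) ∈ D := by exact_mod_cast y.prop
  have hxk := (hD _).mp hx
  have hyk := (hD _).mp hy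
  have ex : (⟨a + ((vl a (x : ZMod n) : ℕ) : ZMod n), by simpa using hmem _ hxk⟩ :
      (D : Set (ZMod n))) = x := Subtype.ext (add_vl a _)
  have ey : (⟨a + ((vl a (y : ZMod n) : ℕ) : ZMod n), by simpa using hmem _ hyk⟩ :
      (D : Set (ZMod n))) = y := Subtype.ext (add_vl a _)
  rw [← ex, ← ey]
  exact (key _ hxk).symm.trans (key _ hyk)

end CDS3

section CDS4
set_option linter.unusedSectionVars false
variable {n : ℕ} [NeZero n]

lemma vl_eq_iff (a x : ZMod n) {t : ℕ} (ht : t < n) : vl a x = t ↔ x = a + (t : ZMod n) := by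
  constructor
  · intro h; rw [← add_vl a x, h]
  · intro h; rw [h, vl_add_cast a t ht]

lemma zmod_two_ne_zero (hn : 4 ≤ n) : (2 : ZMod n) ≠ 0 := by
  have h2 : ((2:ℕ) : ZMod n) ≠ 0 := by
    rw [Ne, ZMod.natCast_eq_zero_iff]
    intro hd
    have := Nat.le_of_dvd (by norm_num) hd
    omega
  exact_mod_cast h2

lemma card_le_n (D : Finset (ZMod n)) : D.card ≤ n := by
  have := Finset.card_le_univ D
  simpa [Finset.card_univ, ZMod.card] using this

lemma dom_of_card (hn : 4 ≤ n) {D : Finset (ZMod n)} (hcard : n - 2 ≤ D.card) :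
    ∀ v : ZMod n, v ∈ D ∨ ∃ u ∈ D, (cycleGraph n).Adj u v := by
  intro v
  by_cases hv : v ∈ D
  · exact Or.inl hv
  right
  by_contra hcon
  push_neg at hcon
  have hone := zmod_one_ne_zero hn
  have h1 : v - 1 ∉ D := by
    intro hm
    refine hcon _ hm ?_
    rw [cyc_adj]
    refine ⟨fun h => hone ?_, Or.inr (by ring)⟩
    have : v - 1 + 1 = v + 1 := by rw [h]
    have := add_right_cancel (by linear_combination this : v - 1 + 1 = v + 1)
    linear_combination -this
  have h2 : v + 1 ∉ D := by
    intro hm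
    refine hcon _ hm ?_
    rw [cyc_adj]
    refine ⟨fun h => hone ?_, Or.inl rfl⟩
    linear_combination h
  -- {v-1, v, v+1} ⊆ univ \ D with card 3, but card (univ \ D) ≤ 2
  have hne1 : v - 1 ≠ v := fun h => hone (by linear_combination -h)
  have hne2 : v ≠ v + 1 := fun h => hone (by linear_combination -h)
  have hne3 : v - 1 ≠ v + 1 := fun h => zmod_two_ne_zero hn (by linear_combination -h)
  have hsub : ({v - 1, v, v + 1} : Finset (ZMod n)) ⊆ Finset.univ \ D := by
    intro x hx
    simp only [Finset.mem_insert, Finset.mem_singleton] at hx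
    rcases hx with rfl | rfl | rfl <;> simp [h1, hv, h2]
  have hc3 : ({v - 1, v, v + 1} : Finset (ZMod n)).card = 3 := by
    rw [Finset.card_insert_of_notMem (by simp [hne1, hne3]),
        Finset.card_insert_of_notMem (by simp [hne2]), Finset.card_singleton]
  have hle := Finset.card_le_card hsub
  rw [Finset.card_sdiff_of_subset (Finset.subset_univ D), Finset.card_univ, ZMod.card] at hle
  have := card_le_n D
  omega

/-- Core structure: interval description, with cardinality. -/
lemma interval_struct (hn : 4 ≤ n) {D : Finset (ZMod n)} (hne : D.Nonempty)
    (hc : ((cycleGraph n).induce (D : Set (ZMod n))).Connected)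
    {a : ZMod n} (ha : a ∉ D) :
    ∃ m M : ℕ, 1 ≤ m ∧ m ≤ M ∧ M ≤ n - 1 ∧
      (∀ x : ZMod n, x ∈ D ↔ (m ≤ vl a x ∧ vl a x ≤ M)) ∧ D.card = M - m + 1 := by
  obtain ⟨m, M, h1, h2, h3, hmem⟩ := structure_lemma hn hne hc ha
  refine ⟨m, M, h1, h2, h3, hmem, ?_⟩
  have hDim : D = (Finset.Icc m M).image (fun t : ℕ => a + (t : ZMod n)) := by
    ext x
    simp only [Finset.mem_image, Finset.mem_Icc, hmem]
    constructor
    · rintro ⟨u1, u2⟩; exact ⟨vl a x, ⟨u1, u2⟩, add_vl a x⟩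
    · rintro ⟨t, ⟨ht1, ht2⟩, rfl⟩
      rw [vl_add_cast a t (by omega)]
      exact ⟨ht1, ht2⟩
  rw [hDim, Finset.card_image_of_injOn, Nat.card_Icc]
  · omega
  · intro s hs t ht hst
    simp only [Finset.coe_Icc, Set.mem_Icc] at hs ht
    have hst' : a + (s : ZMod n) = a + (t : ZMod n) := hst
    have : vl a (a + (s : ZMod n)) = vl a (a + (t : ZMod n)) := by rw [hst']
    rwa [vl_add_cast a s (by omega), vl_add_cast a t (by omega)] at this

lemma card_ge_of_cds (hn : 4 ≤ n) {D : Finset (ZMod n)}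
    (h : ConnDomSet (cycleGraph n) D) : n - 2 ≤ D.card := by
  by_cases hu : D = Finset.univ
  · rw [hu, Finset.card_univ, ZMod.card]; omega
  obtain ⟨a, ha⟩ : ∃ a, a ∉ D := by
    by_contra hc; push_neg at hc
    exact hu (Finset.eq_univ_iff_forall.mpr hc)
  obtain ⟨m, M, h1, h2, h3, hmem, hcard⟩ := interval_struct hn h.1 h.2.1 ha
  by_contra hlt
  push_neg at hlt
  have npos : 0 < n := by omega
  have hvl : ∀ j : ℕ, vl a (a + ((M + j : ℕ) : ZMod n)) = (M + j) % n := by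
    intro j
    rw [← ZMod.natCast_mod, vl_add_cast a _ (Nat.mod_lt _ npos)]
  have hnotmem : ∀ j : ℕ, 1 ≤ j → j ≤ 3 → a + ((M + j : ℕ) : ZMod n) ∉ D := by
    intro j hj1 hj3 hmem'
    rw [hmem, hvl] at hmem'
    have hmod : (M + j) % n = M + j ∨ ((M + j) % n < m) := by
      rcases Nat.lt_or_ge (M + j) n with hj | hj
      · left; exact Nat.mod_eq_of_lt hj
      · right
        have := Nat.mod_lt (M + j) npos
        have h4 : (M + j) % n ≤ M + j - n := by
          conv_lhs => rw [Nat.mod_eq_sub_mod hj]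
          exact Nat.mod_le _ _
        omega
    omega
  rcases h.2.2 (a + ((M + 2 : ℕ) : ZMod n)) with hw | ⟨u, hu', hadj⟩
  · exact hnotmem 2 (by norm_num) (by norm_num) hw
  · rw [cyc_adj] at hadj
    rcases hadj.2 with he | he
    · -- u = w + 1 = a + (M+3)
      refine hnotmem 3 (by norm_num) (by norm_num) ?_
      have : u = a + ((M + 3 : ℕ) : ZMod n) := by push_cast at he ⊢; linear_combination he
      rwa [this] at hu'
    · -- w = u + 1, so u = a + (M+1)
      refine hnotmem 1 (by norm_num) (by norm_num) ?_
      have : u = a + ((M + 1 : ℕ) : ZMod n) := by push_cast at he ⊢; linear_combination -he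
      rwa [this] at hu'

end CDS4

section CDS5
set_option linter.unusedSectionVars false
variable {n : ℕ} [NeZero n]

lemma cast_sub_nat (hn : 4 ≤ n) {j : ℕ} (hj : j ≤ n) : ((n - j : ℕ) : ZMod n) = -(j : ZMod n) := by
  rw [Nat.cast_sub hj, ZMod.natCast_self]
  ring

lemma cds_univ (hn : 4 ≤ n) : ConnDomSet (cycleGraph n) (Finset.univ : Finset (ZMod n)) := by
  refine ⟨⟨0, Finset.mem_univ 0⟩, ?_, dom_of_card hn (by rw [Finset.card_univ, ZMod.card]; omega)⟩
  exact arc_connected hn 0 (by omega : 1 ≤ n) le_rfl (fun x => by simp [vl_lt])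

lemma mem_sdiff_single (hn : 4 ≤ n) (a x : ZMod n) :
    x ∈ Finset.univ \ ({a} : Finset (ZMod n)) ↔ vl (a + 1) x < n - 1 := by
  have hlt := vl_lt (a + 1) x
  have e1 : vl (a + 1) x = n - 1 ↔ x = a := by
    rw [vl_eq_iff _ _ (by omega : n - 1 < n), cast_sub_nat hn (by omega : 1 ≤ n)]
    constructor <;> intro h <;> [skip; rw [h]] <;> [rw [h]; skip] <;> push_cast <;> ring
  simp only [Finset.mem_sdiff, Finset.mem_univ, true_and, Finset.mem_singleton]
  rw [← e1] at *
  omega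

lemma cds_sdiff_single (hn : 4 ≤ n) (a : ZMod n) :
    ConnDomSet (cycleGraph n) (Finset.univ \ {a}) ∧ (Finset.univ \ ({a} : Finset (ZMod n))).card = n - 1 := by
  have hcard : (Finset.univ \ ({a} : Finset (ZMod n))).card = n - 1 := by
    rw [Finset.card_sdiff_of_subset (Finset.subset_univ _), Finset.card_univ, ZMod.card, Finset.card_singleton]
  refine ⟨⟨?_, ?_, dom_of_card hn (by omega)⟩, hcard⟩
  · rw [← Finset.card_pos, hcard]; omega
  · exact arc_connected hn (a + 1) (by omega : 1 ≤ n - 1) (by omega) (mem_sdiff_single hn a)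

lemma mem_sdiff_pair (hn : 4 ≤ n) (i x : ZMod n) :
    x ∈ Finset.univ \ ({i, i + 1} : Finset (ZMod n)) ↔ vl (i + 2) x < n - 2 := by
  have hlt := vl_lt (i + 2) x
  have e1 : vl (i + 2) x = n - 2 ↔ x = i := by
    rw [vl_eq_iff _ _ (by omega : n - 2 < n), cast_sub_nat hn (by omega : 2 ≤ n)]
    constructor <;> intro h <;> [skip; rw [h]] <;> [rw [h]; skip] <;> push_cast <;> ring
  have e2 : vl (i + 2) x = n - 1 ↔ x = i + 1 := by
    rw [vl_eq_iff _ _ (by omega : n - 1 < n), cast_sub_nat hn (by omega : 1 ≤ n)]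
    constructor <;> intro h <;> [skip; rw [h]] <;> [rw [h]; skip] <;> push_cast <;> ring
  simp only [Finset.mem_sdiff, Finset.mem_univ, true_and, Finset.mem_insert,
    Finset.mem_singleton]
  rw [← e1, ← e2] at *
  omega

lemma pair_card (hn : 4 ≤ n) (i : ZMod n) : ({i, i + 1} : Finset (ZMod n)).card = 2 := by
  rw [Finset.card_insert_of_notMem (by
    simp only [Finset.mem_singleton]
    intro h
    exact zmod_one_ne_zero hn (by linear_combination -h)), Finset.card_singleton]

lemma cds_sdiff_pair (hn : 4 ≤ n) (i : ZMod n) :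
    ConnDomSet (cycleGraph n) (Finset.univ \ {i, i + 1}) ∧
      (Finset.univ \ ({i, i + 1} : Finset (ZMod n))).card = n - 2 := by
  have hcard : (Finset.univ \ ({i, i + 1} : Finset (ZMod n))).card = n - 2 := by
    rw [Finset.card_sdiff_of_subset (Finset.subset_univ _), Finset.card_univ, ZMod.card, pair_card hn]
  refine ⟨⟨?_, ?_, dom_of_card hn (by omega)⟩, hcard⟩
  · rw [← Finset.card_pos, hcard]; omega
  · exact arc_connected hn (i + 2) (by omega : 1 ≤ n - 2) (by omega) (mem_sdiff_pair hn i)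

lemma pair_of_card (hn : 4 ≤ n) {D : Finset (ZMod n)} (hne : D.Nonempty)
    (hc : ((cycleGraph n).induce (D : Set (ZMod n))).Connected)
    (hcard : D.card = n - 2) : ∃ i : ZMod n, D = Finset.univ \ {i, i + 1} := by
  have hnu : D ≠ Finset.univ := by
    intro h; rw [h, Finset.card_univ, ZMod.card] at hcard; omega
  obtain ⟨a, ha⟩ : ∃ a, a ∉ D := by
    by_contra hcon; push_neg at hcon
    exact hnu (Finset.eq_univ_iff_forall.mpr hcon)
  obtain ⟨m, M, h1, h2, h3, hmem, hcD⟩ := interval_struct hn hne hc ha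
  have hcases : (m = 1 ∧ M = n - 2) ∨ (m = 2 ∧ M = n - 1) := by omega
  rcases hcases with ⟨rfl, rfl⟩ | ⟨rfl, rfl⟩
  · refine ⟨a - 1, ?_⟩
    ext x
    have e0 := vl_eq_zero_iff a x
    have e1 : vl a x = n - 1 ↔ x = a - 1 := by
      rw [vl_eq_iff _ _ (by omega : n - 1 < n), cast_sub_nat hn (by omega : 1 ≤ n)]
      constructor <;> intro h <;> [skip; rw [h]] <;> [rw [h]; skip] <;> push_cast <;> ring
    have hlt := vl_lt a x
    simp only [hmem x, Finset.mem_sdiff, Finset.mem_univ, true_and, Finset.mem_insert,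
      Finset.mem_singleton, show a - 1 + 1 = a by ring, ← e0, ← e1]
    omega
  · refine ⟨a, ?_⟩
    ext x
    have e0 := vl_eq_zero_iff a x
    have e1 : vl a x = 1 ↔ x = a + 1 := by
      rw [vl_eq_iff _ _ (by omega : 1 < n)]; push_cast; rfl
    have hlt := vl_lt a x
    simp only [hmem x, Finset.mem_sdiff, Finset.mem_univ, true_and, Finset.mem_insert,
      Finset.mem_singleton, ← e0, ← e1]
    omega

end CDS5

/-- In the cycle `C_n` (`n ≥ 4`), the connected dominating sets are exactly the
subsets of size `≥ n-2` with connected induced subgraph: explicitly the sets of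
`n-2` consecutive vertices (complement `{i, i+1}`), all `(n-1)`-subsets, and
the full vertex set; there are `n`, `n` and `1` of them respectively, whence
`D^c_{C_n}(-1) = (-1)^n`. -/
theorem cycle_connected_dominating (n : ℕ) [NeZero n] (hn : 4 ≤ n) :
    (∀ D : Finset (ZMod n), ConnDomSet (cycleGraph n) D ↔
      (n - 2 ≤ D.card ∧ D.Nonempty ∧
        ((cycleGraph n).induce (D : Set (ZMod n))).Connected)) ∧
    (∀ D : Finset (ZMod n), (ConnDomSet (cycleGraph n) D ∧ D.card = n - 2) ↔
      ∃ i : ZMod n, D = Finset.univ \ {i, i + 1}) ∧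
    (Finset.univ.filter (fun D : Finset (ZMod n) =>
        ConnDomSet (cycleGraph n) D ∧ D.card = n - 2)).card = n ∧
    (Finset.univ.filter (fun D : Finset (ZMod n) =>
        ConnDomSet (cycleGraph n) D ∧ D.card = n - 1)).card = n ∧
    (Finset.univ.filter (fun D : Finset (ZMod n) =>
        ConnDomSet (cycleGraph n) D ∧ D.card = n)).card = 1 ∧
    (∑ D : Finset (ZMod n),
        if ConnDomSet (cycleGraph n) D then (-1 : ℤ) ^ D.card else 0) =
      (-1 : ℤ) ^ n := by
  have part1 : ∀ D : Finset (ZMod n), ConnDomSet (cycleGraph n) D ↔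
      (n - 2 ≤ D.card ∧ D.Nonempty ∧
        ((cycleGraph n).induce (D : Set (ZMod n))).Connected) := by
    intro D
    constructor
    · intro h
      exact ⟨card_ge_of_cds hn h, h.1, h.2.1⟩
    · rintro ⟨hc, hne, hconn⟩
      exact ⟨hne, hconn, dom_of_card hn hc⟩
  have part2 : ∀ D : Finset (ZMod n), (ConnDomSet (cycleGraph n) D ∧ D.card = n - 2) ↔
      ∃ i : ZMod n, D = Finset.univ \ {i, i + 1} := by
    intro D
    constructor
    · rintro ⟨h, hcard⟩
      exact pair_of_card hn h.1 h.2.1 hcard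
    · rintro ⟨i, rfl⟩
      exact cds_sdiff_pair hn i
  -- the three filters
  have hcompl_inj : ∀ A B : Finset (ZMod n),
      Finset.univ \ A = Finset.univ \ B → A = B := by
    intro A B h
    have := congrArg (fun s => Finset.univ \ s) h
    simpa [Finset.sdiff_sdiff_self_left] using this
  have part3 : (Finset.univ.filter (fun D : Finset (ZMod n) =>
      ConnDomSet (cycleGraph n) D ∧ D.card = n - 2)).card = n := by
    have heq : Finset.univ.filter (fun D : Finset (ZMod n) =>
        ConnDomSet (cycleGraph n) D ∧ D.card = n - 2) =
        Finset.univ.image (fun i : ZMod n => Finset.univ \ {i, i + 1}) := by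
      ext D
      simp only [Finset.mem_filter, Finset.mem_univ, true_and, Finset.mem_image, part2 D]
      exact exists_congr fun i => eq_comm
    rw [heq, Finset.card_image_of_injective _ ?_, Finset.card_univ, ZMod.card]
    intro i j h
    have hpair : ({i, i + 1} : Finset (ZMod n)) = {j, j + 1} := hcompl_inj _ _ h
    have hi : i ∈ ({j, j + 1} : Finset (ZMod n)) := by rw [← hpair]; simp
    simp only [Finset.mem_insert, Finset.mem_singleton] at hi
    rcases hi with rfl | rfl
    · rfl
    · have hj : j ∈ ({j + 1, j + 1 + 1} : Finset (ZMod n)) := by rw [hpair]; simp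
      simp only [Finset.mem_insert, Finset.mem_singleton] at hj
      rcases hj with hj | hj
      · exact absurd hj (fun h' => zmod_one_ne_zero hn (by linear_combination -h'))
      · exact absurd hj (fun h' => zmod_two_ne_zero hn (by linear_combination -h'))
  have part4 : (Finset.univ.filter (fun D : Finset (ZMod n) =>
      ConnDomSet (cycleGraph n) D ∧ D.card = n - 1)).card = n := by
    have hiff : ∀ D : Finset (ZMod n), (ConnDomSet (cycleGraph n) D ∧ D.card = n - 1) ↔
        ∃ a : ZMod n, D = Finset.univ \ {a} := by
      intro D
      constructor
      · rintro ⟨h, hcard⟩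
        have hc1 : (Finset.univ \ D).card = 1 := by
          rw [Finset.card_sdiff_of_subset (Finset.subset_univ _), Finset.card_univ, ZMod.card, hcard]
          omega
        obtain ⟨a, ha⟩ := Finset.card_eq_one.mp hc1
        exact ⟨a, by rw [← ha, Finset.sdiff_sdiff_self_left, Finset.univ_inter]⟩
      · rintro ⟨a, rfl⟩
        exact cds_sdiff_single hn a
    have heq : Finset.univ.filter (fun D : Finset (ZMod n) =>
        ConnDomSet (cycleGraph n) D ∧ D.card = n - 1) =
        Finset.univ.image (fun a : ZMod n => Finset.univ \ {a}) := by
      ext D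
      simp only [Finset.mem_filter, Finset.mem_univ, true_and, Finset.mem_image, hiff D]
      exact exists_congr fun a => eq_comm
    rw [heq, Finset.card_image_of_injective _ ?_, Finset.card_univ, ZMod.card]
    intro a b h
    have := hcompl_inj _ _ h
    simpa using this
  have part5 : (Finset.univ.filter (fun D : Finset (ZMod n) =>
      ConnDomSet (cycleGraph n) D ∧ D.card = n)).card = 1 := by
    have heq : Finset.univ.filter (fun D : Finset (ZMod n) =>
        ConnDomSet (cycleGraph n) D ∧ D.card = n) = {Finset.univ} := by
      ext D
      simp only [Finset.mem_filter, Finset.mem_univ, true_and, Finset.mem_singleton]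
      constructor
      · rintro ⟨_, hcard⟩
        apply Finset.eq_univ_of_card
        rw [hcard]
        exact (ZMod.card n).symm
      · rintro rfl
        exact ⟨cds_univ hn, by rw [Finset.card_univ, ZMod.card]⟩
    rw [heq, Finset.card_singleton]
  refine ⟨part1, part2, part3, part4, part5, ?_⟩
  -- the alternating sum
  classical
  set P := fun D : Finset (ZMod n) => ConnDomSet (cycleGraph n) D with hP
  have hsum : (∑ D : Finset (ZMod n), if P D then (-1 : ℤ) ^ D.card else 0) =
      ∑ D ∈ Finset.univ.filter P, (-1 : ℤ) ^ D.card := (Finset.sum_filter _ _).symm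
  rw [hsum]
  have hsplit : Finset.univ.filter P =
      (Finset.univ.filter (fun D => P D ∧ D.card = n - 2)) ∪
      ((Finset.univ.filter (fun D => P D ∧ D.card = n - 1)) ∪
       (Finset.univ.filter (fun D => P D ∧ D.card = n))) := by
    ext D
    simp only [Finset.mem_filter, Finset.mem_union, Finset.mem_univ, true_and]
    constructor
    · intro h
      have h1 := card_ge_of_cds hn h
      have h2 := card_le_n D
      have : D.card = n - 2 ∨ D.card = n - 1 ∨ D.card = n := by omega
      tauto
    · tauto
  have hd1 : Disjoint (Finset.univ.filter (fun D : Finset (ZMod n) => P D ∧ D.card = n - 2))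
      ((Finset.univ.filter (fun D => P D ∧ D.card = n - 1)) ∪
       (Finset.univ.filter (fun D => P D ∧ D.card = n))) := by
    rw [Finset.disjoint_left]
    intro D hD hD'
    simp only [Finset.mem_filter, Finset.mem_union, Finset.mem_univ, true_and] at hD hD'
    omega
  have hd2 : Disjoint (Finset.univ.filter (fun D : Finset (ZMod n) => P D ∧ D.card = n - 1))
      (Finset.univ.filter (fun D => P D ∧ D.card = n)) := by
    rw [Finset.disjoint_left]
    intro D hD hD'
    simp only [Finset.mem_filter, Finset.mem_univ, true_and] at hD hD'
    omega
  rw [hsplit, Finset.sum_union hd1, Finset.sum_union hd2]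
  have e2 : (∑ D ∈ Finset.univ.filter (fun D : Finset (ZMod n) => P D ∧ D.card = n - 2),
      (-1 : ℤ) ^ D.card) = (n : ℤ) * (-1 : ℤ) ^ (n - 2) := by
    rw [Finset.sum_congr rfl (fun D hD => by
      rw [(Finset.mem_filter.mp hD).2.2]), Finset.sum_const, part3, nsmul_eq_mul]
  have e1 : (∑ D ∈ Finset.univ.filter (fun D : Finset (ZMod n) => P D ∧ D.card = n - 1),
      (-1 : ℤ) ^ D.card) = (n : ℤ) * (-1 : ℤ) ^ (n - 1) := by
    rw [Finset.sum_congr rfl (fun D hD => by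
      rw [(Finset.mem_filter.mp hD).2.2]), Finset.sum_const, part4, nsmul_eq_mul]
  have e0 : (∑ D ∈ Finset.univ.filter (fun D : Finset (ZMod n) => P D ∧ D.card = n),
      (-1 : ℤ) ^ D.card) = (-1 : ℤ) ^ n := by
    rw [Finset.sum_congr rfl (fun D hD => by
      rw [(Finset.mem_filter.mp hD).2.2]), Finset.sum_const, part5, one_nsmul]
  rw [e2, e1, e0]
  obtain ⟨k, rfl⟩ : ∃ k, n = k + 2 := ⟨n - 2, by omega⟩
  have h2 : k + 2 - 2 = k := by omega
  have h1 : k + 2 - 1 = k + 1 := by omega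
  rw [h2, h1, pow_succ, pow_succ]
  ring
end

section
/- Let (C_*, ∂) be a finitely generated chain complex over a field with chosen bases B_i for each C_i. Suppose M is a matching on the associated directed graph (vertices the basis elements, edges (a,b) when ⟨∂a, b⟩ ≠ 0) partitioned into acyclic sub-matchings M_1, …, M_k, and there is a function φ from the basis elements to ℕ such that: (1) if (a,b) ∈ M_s then φ(a) = φ(b); (2) if ⟨∂a, b⟩ ≠ 0 and (a,b) ∉ M, then φ(b) > φ(a). Then M is acyclic. -/
/-- The directed graph associated to a based chain complex has an edge `a → b`
whenever the coefficient `⟨∂a, b⟩ = c a b` is nonzero.  Given a matching `M`,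
`HasDirCycleRev c M` says the graph obtained by reversing the matched edges
has a directed cycle. -/
def HasDirCycleRev {B : Type*} {K : Type*} [Field K]
    (c : B → B → K) (M : Set (B × B)) : Prop :=
  ∃ (n : ℕ) (f : ℕ → B), 0 < n ∧ f n = f 0 ∧
    ∀ i < n, (c (f i) (f (i + 1)) ≠ 0 ∧ (f i, f (i + 1)) ∉ M) ∨
      (f (i + 1), f i) ∈ M

/-- Technical Lemma: let `(C_*, ∂)` be a based chain complex over a field,
encoded by its basis elements `B`, degrees `deg`, and differential
coefficients `c` (raising degree by one).  If a matching `M` on the associated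
directed graph is partitioned into acyclic sub-matchings `M_1, …, M_k`, and
there is `φ : B → ℕ` which is constant on each matched pair and strictly
increases along every unmatched edge, then `M` is acyclic. -/
theorem technical_lemma_acyclic_matching
    {B K : Type*} [Field K]
    (c : B → B → K) (deg : B → ℕ)
    (hdeg : ∀ a b : B, c a b ≠ 0 → deg b = deg a + 1)
    (k : ℕ) (M : Fin k → Set (B × B))
    (hedge : ∀ s, ∀ p ∈ M s, c p.1 p.2 ≠ 0)
    (hdisj : ∀ s t : Fin k, s ≠ t → Disjoint (M s) (M t))
    (hmatch : ∀ p ∈ ⋃ s, M s, ∀ q ∈ ⋃ s, M s, p ≠ q →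
      p.1 ≠ q.1 ∧ p.1 ≠ q.2 ∧ p.2 ≠ q.1 ∧ p.2 ≠ q.2)
    (hacyclic : ∀ s, ¬ HasDirCycleRev c (M s))
    (φ : B → ℕ)
    (h1 : ∀ s, ∀ p ∈ M s, φ p.1 = φ p.2)
    (h2 : ∀ a b : B, c a b ≠ 0 → (a, b) ∉ ⋃ s, M s → φ b > φ a) :
    ¬ HasDirCycleRev c (⋃ s, M s) := by
  rintro ⟨n, f, hn, hcl, hstep⟩
  -- φ is non-decreasing along the cycle
  have hmono1 : ∀ i < n, φ (f i) ≤ φ (f (i + 1)) := by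
    intro i hi
    rcases hstep i hi with ⟨hc, hnm⟩ | hm
    · exact le_of_lt (h2 _ _ hc hnm)
    · rcases Set.mem_iUnion.mp hm with ⟨s, hs⟩
      exact le_of_eq (h1 s _ hs).symm
  have hup : ∀ j, j ≤ n → ∀ i ≤ j, φ (f i) ≤ φ (f j) := by
    intro j
    induction j with
    | zero =>
      intro _ i hi
      rw [Nat.le_zero.mp hi]
    | succ j ih =>
      intro hj i hi
      rcases Nat.lt_or_ge i (j + 1) with h | h
      · exact le_trans (ih (by omega) i (by omega)) (hmono1 j (by omega))
      · have : i = j + 1 := by omega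
        rw [this]
  -- hence φ is constant, so every step is matched
  have hconst : ∀ i ≤ n, φ (f i) = φ (f 0) := by
    intro i hi
    have a := hup n le_rfl i hi
    have b := hup i hi 0 (Nat.zero_le _)
    rw [hcl] at a
    omega
  have hmatched : ∀ i < n, (f (i + 1), f i) ∈ ⋃ s, M s := by
    intro i hi
    rcases hstep i hi with ⟨hc, hnm⟩ | hm
    · exfalso
      have hlt := h2 _ _ hc hnm
      have e1 := hconst i (le_of_lt hi)
      have e2 := hconst (i + 1) hi
      omega
    · exact hm
  -- matched steps drop degree by one
  have hdegstep : ∀ i < n, deg (f i) = deg (f (i + 1)) + 1 := by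
    intro i hi
    rcases Set.mem_iUnion.mp (hmatched i hi) with ⟨s, hs⟩
    exact hdeg _ _ (hedge s _ hs)
  have hdegsum : ∀ i ≤ n, deg (f 0) = deg (f i) + i := by
    intro i hi
    induction i with
    | zero => simp
    | succ j ih =>
      have := hdegstep j (by omega)
      have := ih (by omega)
      omega
  have := hdegsum n le_rfl
  rw [hcl] at this
  omega
end

section
/- Let G₀ and G₁ be finite simple connected graphs with roots r₀, r₁, and let NS(G₀,G₁,k) be the graph obtained from the disjoint union of G₀ and G₁ by connecting r₀ to r₁ via a path with k-1 new internal vertices (so NS(G₀,G₁,1) joins the roots by a single edge). Then every connected dominating set of NS(G₀,G₁,k) contains all the k-1 internal path vertices together with r₀ and r₁ whenever both G₀ and G₁ have at least 2 vertices; and the map D ↦ D ∪ {new internal vertices} is a bijection from connected dominating sets of NS(G₀,G₁,1) to connected dominating sets of NS(G₀,G₁,k), shifting cardinality by k-1. Consequently D^c_{NS(G₀,G₁,k)}(-1) = (-1)^{k-1} D^c_{NS(G₀,G₁,1)}(-1). -/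
open Finset

attribute [local instance] Classical.propDecidable

/-- The "neck-stretch" graph `NS(G₀, G₁, k)` with `j = k - 1` internal
vertices: the disjoint union of `G₀` and `G₁` with the roots `r₀, r₁` joined
by a path `r₀ — p₀ — ⋯ — p_{j-1} — r₁` through `j` new vertices (for `j = 0`,
the roots are joined by a single edge). -/
def nsGraph {V₀ V₁ : Type*} (G₀ : SimpleGraph V₀) (G₁ : SimpleGraph V₁)
    (r₀ : V₀) (r₁ : V₁) (j : ℕ) : SimpleGraph (V₀ ⊕ V₁ ⊕ Fin j) :=
  SimpleGraph.fromRel (fun a b =>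
    match a, b with
    | Sum.inl a, Sum.inl b => G₀.Adj a b
    | Sum.inr (Sum.inl a), Sum.inr (Sum.inl b) => G₁.Adj a b
    | Sum.inl a, Sum.inr (Sum.inr p) => a = r₀ ∧ (p : ℕ) = 0
    | Sum.inr (Sum.inl b), Sum.inr (Sum.inr p) => b = r₁ ∧ (p : ℕ) + 1 = j
    | Sum.inr (Sum.inr p), Sum.inr (Sum.inr q) => (q : ℕ) = (p : ℕ) + 1
    | Sum.inl a, Sum.inr (Sum.inl b) => j = 0 ∧ a = r₀ ∧ b = r₁
    | _, _ => False)

/-- The canonical embedding of the vertices of `NS(G₀,G₁,1)` into those of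
`NS(G₀,G₁,k)`. -/
def nsEmb (V₀ V₁ : Type*) (j : ℕ) : (V₀ ⊕ V₁ ⊕ Fin 0) ↪ (V₀ ⊕ V₁ ⊕ Fin j) :=
  (Function.Embedding.refl V₀).sumMap
    ((Function.Embedding.refl V₁).sumMap ⟨Fin.elim0, fun a => a.elim0⟩)

/-!
Give the vertices of `NS(G₀, G₁, k)` a level: `0` on `G₀`, `i` on `pᵢ`, `k` on `G₁`. Edges
change the level by at most one, and the only edges between different levels are those of the
path `r₀ — p₁ — ⋯ — r₁`. A connected dominating set meets level `0` and level `k`, since a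
non-root vertex of `Gᵢ` can only be dominated from `Gᵢ`; so a walk inside it crosses every edge
of that path. Connectivity and domination then transfer along adding the path, replacing the
edge `r₀ r₁` by the path, and back along collapsing the path onto `r₀`.
-/

theorem SimpleGraph.Reachable.lift {V W : Type*} {G : SimpleGraph V} {H : SimpleGraph W}
    (f : V → W) (hf : ∀ u v, G.Adj u v → H.Reachable (f u) (f v)) {u v : V}
    (h : G.Reachable u v) : H.Reachable (f u) (f v) := by
  rw [SimpleGraph.reachable_iff_reflTransGen] at h ⊢
  exact h.lift' f fun a b hab => (SimpleGraph.reachable_iff_reflTransGen _ _).1 (hf a b hab)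

theorem Finset.sum_ite_eq_of_bijOn {α β M : Type*} [Fintype α] [Fintype β] [AddCommMonoid M]
    {p : α → Prop} {q : β → Prop} [DecidablePred p] [DecidablePred q] {f : α → M} {g : β → M}
    (e : α → β) (he : Set.BijOn e {a | p a} {b | q b}) (hfg : ∀ a, p a → f a = g (e a)) :
    (∑ a, if p a then f a else 0) = ∑ b, if q b then g b else 0 := by
  rw [← Finset.sum_filter, ← Finset.sum_filter]
  exact Finset.sum_nbij e (fun a ha => by simpa using he.mapsTo (by simpa using ha))
    (by simpa using he.injOn) (by simpa using he.surjOn) (by simpa using hfg)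

namespace NeckStretch

open SimpleGraph

variable {V₀ V₁ : Type*} {G₀ : SimpleGraph V₀} {G₁ : SimpleGraph V₁} {r₀ : V₀} {r₁ : V₁}
  {j : ℕ}

def level (j : ℕ) : V₀ ⊕ V₁ ⊕ Fin j → ℕ
  | .inl _ => 0
  | .inr (.inl _) => j + 1
  | .inr (.inr p) => p + 1

def spine (r₀ : V₀) (r₁ : V₁) (j : ℕ) : ℕ → V₀ ⊕ V₁ ⊕ Fin j
  | 0 => .inl r₀
  | i + 1 => if h : i < j then .inr (.inr ⟨i, h⟩) else .inr (.inl r₁)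

@[simp] lemma spine_zero : spine r₀ r₁ j 0 = .inl r₀ := rfl

lemma spine_succ_of_lt {i : ℕ} (hi : i < j) : spine r₀ r₁ j (i + 1) = .inr (.inr ⟨i, hi⟩) := by
  simp [spine, hi]

@[simp] lemma spine_succ_self : spine r₀ r₁ j (j + 1) = .inr (.inl r₁) := by
  simp [spine]

lemma adj_spine_succ {i : ℕ} (hi : i ≤ j) :
    (nsGraph G₀ G₁ r₀ r₁ j).Adj (spine r₀ r₁ j i) (spine r₀ r₁ j (i + 1)) := by
  obtain rfl | hi := hi.eq_or_lt
  · rw [spine_succ_self]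
    rcases i with _ | i
    · simp [nsGraph]
    · simp [spine_succ_of_lt (Nat.lt_succ_self i), nsGraph]
  · rw [spine_succ_of_lt hi]
    rcases i with _ | i
    · simp [nsGraph]
    · simp [spine_succ_of_lt (Nat.lt_of_succ_lt hi), nsGraph]

lemma eq_spine_of_adj_of_level_lt {x y : V₀ ⊕ V₁ ⊕ Fin j} (h : (nsGraph G₀ G₁ r₀ r₁ j).Adj x y)
    (hxy : level j x < level j y) :
    level j y = level j x + 1 ∧ x = spine r₀ r₁ j (level j x) ∧ y = spine r₀ r₁ j (level j y) := by
  rcases x with a | b | ⟨p, hp⟩ <;> rcases y with a' | b' | ⟨q, hq⟩ <;>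
    simp [nsGraph, level, spine] at h hxy ⊢ <;> grind

lemma level_eq_zero_of_adj_inl {u : V₀ ⊕ V₁ ⊕ Fin j} {a : V₀}
    (h : (nsGraph G₀ G₁ r₀ r₁ j).Adj u (.inl a)) (ha : a ≠ r₀) : level j u = 0 := by
  rcases u with a' | b | p <;> simp_all [nsGraph, level]

lemma level_eq_succ_of_adj_inr_inl {u : V₀ ⊕ V₁ ⊕ Fin j} {b : V₁}
    (h : (nsGraph G₀ G₁ r₀ r₁ j).Adj u (.inr (.inl b))) (hb : b ≠ r₁) : level j u = j + 1 := by
  rcases u with a | b' | p <;> simp_all [nsGraph, level]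

def contract (r₀ : V₀) : V₀ ⊕ V₁ ⊕ Fin j → V₀ ⊕ V₁ ⊕ Fin 0
  | .inl a => .inl a
  | .inr (.inl b) => .inr (.inl b)
  | .inr (.inr _) => .inl r₀

@[simp] lemma contract_nsEmb (x : V₀ ⊕ V₁ ⊕ Fin 0) : contract r₀ (nsEmb V₀ V₁ j x) = x := by
  rcases x with a | b | ⟨_, ⟨⟩⟩ <;> rfl

lemma exists_nsEmb_eq_or_eq_path (v : V₀ ⊕ V₁ ⊕ Fin j) :
    (∃ x, nsEmb V₀ V₁ j x = v) ∨ ∃ p : Fin j, v = .inr (.inr p) := by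
  rcases v with a | b | p
  · exact .inl ⟨.inl a, rfl⟩
  · exact .inl ⟨.inr (.inl b), rfl⟩
  · exact .inr ⟨p, rfl⟩

lemma adj_contract_or_eq {x y : V₀ ⊕ V₁ ⊕ Fin j} (h : (nsGraph G₀ G₁ r₀ r₁ j).Adj x y) :
    (nsGraph G₀ G₁ r₀ r₁ 0).Adj (contract r₀ x) (contract r₀ y) ∨
      contract r₀ x = contract r₀ y := by
  rcases x with a | b | p <;> rcases y with a' | b' | q <;>
    simp_all [nsGraph, contract]

lemma adj_nsEmb_or_roots {u v : V₀ ⊕ V₁ ⊕ Fin 0} (h : (nsGraph G₀ G₁ r₀ r₁ 0).Adj u v) :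
    (nsGraph G₀ G₁ r₀ r₁ j).Adj (nsEmb V₀ V₁ j u) (nsEmb V₀ V₁ j v) ∨
      (u = .inl r₀ ∧ v = .inr (.inl r₁)) ∨ (u = .inr (.inl r₁) ∧ v = .inl r₀) := by
  rcases u with a | b | ⟨_, ⟨⟩⟩ <;> rcases v with a' | b' | ⟨_, ⟨⟩⟩ <;>
    simp_all [nsGraph, nsEmb]

lemma reachable_spine {t : Set (V₀ ⊕ V₁ ⊕ Fin j)} (ht : ∀ i ≤ j + 1, spine r₀ r₁ j i ∈ t)
    {i : ℕ} (hi : i ≤ j + 1) :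
    ((nsGraph G₀ G₁ r₀ r₁ j).induce t).Reachable ⟨spine r₀ r₁ j 0, ht 0 (Nat.zero_le _)⟩
      ⟨spine r₀ r₁ j i, ht i hi⟩ := by
  induction i with
  | zero => rfl
  | succ i ih =>
    exact (ih (by omega)).trans (induce_adj.2 (adj_spine_succ (by omega))).reachable

section Stretch

variable [DecidableEq V₀] [DecidableEq V₁]

def stretch (j : ℕ) (D : Finset (V₀ ⊕ V₁ ⊕ Fin 0)) : Finset (V₀ ⊕ V₁ ⊕ Fin j) :=
  D.map (nsEmb V₀ V₁ j) ∪ univ.image fun p : Fin j => .inr (.inr p)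

lemma nsEmb_mem_stretch {D : Finset (V₀ ⊕ V₁ ⊕ Fin 0)} {x : V₀ ⊕ V₁ ⊕ Fin 0} :
    nsEmb V₀ V₁ j x ∈ stretch j D ↔ x ∈ D := by
  rcases x with a | b | ⟨_, ⟨⟩⟩ <;> simp [stretch, nsEmb]

lemma path_mem_stretch (D : Finset (V₀ ⊕ V₁ ⊕ Fin 0)) (p : Fin j) :
    .inr (.inr p) ∈ stretch j D := by
  simp [stretch]

lemma stretch_injective : Function.Injective (stretch (V₀ := V₀) (V₁ := V₁) j) := by
  intro D₁ D₂ h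
  ext x
  rw [← nsEmb_mem_stretch (j := j), h, nsEmb_mem_stretch]

lemma card_stretch (D : Finset (V₀ ⊕ V₁ ⊕ Fin 0)) : (stretch j D).card = D.card + j := by
  rw [stretch, card_union_of_disjoint, card_map,
    card_image_of_injective _ (fun _ _ h => by simpa using h), card_univ, Fintype.card_fin]
  rw [Finset.disjoint_left]
  rintro _ hx
  obtain ⟨x, -, rfl⟩ := mem_map.1 hx
  rcases x with a | b | ⟨_, ⟨⟩⟩ <;> simp [nsEmb]

lemma stretch_preimage {D' : Finset (V₀ ⊕ V₁ ⊕ Fin j)} (h : ∀ p : Fin j, .inr (.inr p) ∈ D') :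
    stretch j (D'.preimage (nsEmb V₀ V₁ j) (nsEmb V₀ V₁ j).injective.injOn) = D' := by
  ext v
  obtain ⟨x, rfl⟩ | ⟨p, rfl⟩ := exists_nsEmb_eq_or_eq_path v
  · rw [nsEmb_mem_stretch, mem_preimage]
  · exact iff_of_true (path_mem_stretch _ p) (h p)

end Stretch

section Nontrivial

variable [Nontrivial V₀] [Nontrivial V₁] {D : Finset (V₀ ⊕ V₁ ⊕ Fin j)}

lemma exists_mem_level_eq_zero_and_succ (hD : ConnDomSet (nsGraph G₀ G₁ r₀ r₁ j) D) :
    (∃ x ∈ D, level j x = 0) ∧ ∃ y ∈ D, level j y = j + 1 := by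
  obtain ⟨a, ha⟩ := exists_ne r₀
  obtain ⟨b, hb⟩ := exists_ne r₁
  constructor
  · rcases hD.2.2 (.inl a) with h | ⟨u, hu, hadj⟩
    · exact ⟨_, h, rfl⟩
    · exact ⟨u, hu, level_eq_zero_of_adj_inl hadj ha⟩
  · rcases hD.2.2 (.inr (.inl b)) with h | ⟨u, hu, hadj⟩
    · exact ⟨_, h, rfl⟩
    · exact ⟨u, hu, level_eq_succ_of_adj_inr_inl hadj hb⟩

lemma spine_mem_of_connDomSet (hD : ConnDomSet (nsGraph G₀ G₁ r₀ r₁ j) D) {i : ℕ}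
    (hi : i ≤ j) : spine r₀ r₁ j i ∈ D ∧ spine r₀ r₁ j (i + 1) ∈ D := by
  obtain ⟨⟨x, hx, hx0⟩, ⟨y, hy, hy1⟩⟩ := exists_mem_level_eq_zero_and_succ hD
  obtain ⟨w⟩ := hD.2.1.preconnected ⟨x, hx⟩ ⟨y, hy⟩
  obtain ⟨⟨⟨⟨u, hu⟩, ⟨v, hv⟩⟩, hadj⟩, -, hui, hiv⟩ :=
    w.exists_boundary_dart {z | level j z.1 ≤ i} (by simp [hx0]) (by simp [hy1, hi])
  simp only [Set.mem_ofPred_eq, not_le] at hui hiv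
  have hadj' : (nsGraph G₀ G₁ r₀ r₁ j).Adj u v := induce_adj.1 hadj
  obtain ⟨hvu, hu_eq, hv_eq⟩ := eq_spine_of_adj_of_level_lt hadj' (hui.trans_lt hiv)
  have hui' : level j u = i := by omega
  rw [hui'] at hu_eq
  rw [hvu, hui'] at hv_eq
  exact ⟨hu_eq ▸ hu, hv_eq ▸ hv⟩

lemma neck_subset_of_connDomSet (hD : ConnDomSet (nsGraph G₀ G₁ r₀ r₁ j) D) :
    (∀ p : Fin j, .inr (.inr p) ∈ D) ∧ .inl r₀ ∈ D ∧ .inr (.inl r₁) ∈ D := by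
  refine ⟨fun p => ?_, (spine_mem_of_connDomSet hD (Nat.zero_le j)).1,
    spine_succ_self (r₀ := r₀) ▸ (spine_mem_of_connDomSet hD le_rfl).2⟩
  simpa [spine_succ_of_lt p.2] using (spine_mem_of_connDomSet hD p.2.le).2

theorem connDomSet_preimage_nsEmb {D' : Finset (V₀ ⊕ V₁ ⊕ Fin j)}
    (hD' : ConnDomSet (nsGraph G₀ G₁ r₀ r₁ j) D') :
    ConnDomSet (nsGraph G₀ G₁ r₀ r₁ 0)
      (D'.preimage (nsEmb V₀ V₁ j) (nsEmb V₀ V₁ j).injective.injOn) := by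
  set D := D'.preimage (nsEmb V₀ V₁ j) (nsEmb V₀ V₁ j).injective.injOn
  obtain ⟨-, hr₀, -⟩ := neck_subset_of_connDomSet hD'
  have hr₀' : (.inl r₀ : V₀ ⊕ V₁ ⊕ Fin 0) ∈ D := mem_preimage.2 hr₀
  have hmaps : Set.MapsTo (contract r₀) (D' : Set (V₀ ⊕ V₁ ⊕ Fin j))
      (D : Set (V₀ ⊕ V₁ ⊕ Fin 0)) := by
    intro v hv
    obtain ⟨x, rfl⟩ | ⟨p, rfl⟩ := exists_nsEmb_eq_or_eq_path v
    · simpa [D] using hv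
    · exact hr₀'
  refine ⟨⟨_, hr₀'⟩, (connected_iff _).2 ⟨?_, ⟨⟨_, hr₀'⟩⟩⟩, fun x => ?_⟩
  · rintro ⟨x, hx⟩ ⟨y, hy⟩
    have := (hD'.2.1.preconnected ⟨_, mem_preimage.1 hx⟩ ⟨_, mem_preimage.1 hy⟩).lift
      (H := (nsGraph G₀ G₁ r₀ r₁ 0).induce (D : Set (V₀ ⊕ V₁ ⊕ Fin 0))) hmaps.restrict ?_
    · convert this using 1 <;> exact Subtype.ext (by simp)
    rintro ⟨u, hu⟩ ⟨v, hv⟩ huv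
    rcases adj_contract_or_eq (induce_adj.1 huv) with h | h
    · exact (induce_adj.2 h).reachable
    · exact (Subtype.ext h : hmaps.restrict _ _ _ ⟨u, hu⟩ = hmaps.restrict _ _ _ ⟨v, hv⟩) ▸ .rfl
  · rcases hD'.2.2 (nsEmb V₀ V₁ j x) with hx | ⟨u, hu, hux⟩
    · exact .inl (mem_preimage.2 hx)
    · rcases adj_contract_or_eq hux with h | h
      · exact .inr ⟨_, hmaps hu, by simpa using h⟩
      · exact .inl (by simpa [h] using hmaps hu)

variable [DecidableEq V₀] [DecidableEq V₁]

theorem connDomSet_stretch {D : Finset (V₀ ⊕ V₁ ⊕ Fin 0)}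
    (hD : ConnDomSet (nsGraph G₀ G₁ r₀ r₁ 0) D) :
    ConnDomSet (nsGraph G₀ G₁ r₀ r₁ j) (stretch j D) := by
  obtain ⟨-, hr₀, hr₁⟩ := neck_subset_of_connDomSet hD
  have hr₀' : .inl r₀ ∈ stretch j D := nsEmb_mem_stretch.2 hr₀
  have hspine : ∀ i ≤ j + 1, spine r₀ r₁ j i ∈ stretch j D := by
    rintro (_ | i) hi
    · exact hr₀'
    · obtain hij | rfl := Nat.lt_or_eq_of_le (Nat.le_of_succ_le_succ hi)
      · rw [spine_succ_of_lt hij]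
        exact path_mem_stretch D _
      · rw [spine_succ_self]
        exact nsEmb_mem_stretch.2 hr₁
  have hroots : ((nsGraph G₀ G₁ r₀ r₁ j).induce (stretch j D : Set _)).Reachable
      ⟨.inl r₀, hr₀'⟩ ⟨.inr (.inl r₁), nsEmb_mem_stretch.2 hr₁⟩ := by
    simpa using reachable_spine hspine le_rfl
  refine ⟨⟨_, hr₀'⟩, ?_, fun v => ?_⟩
  · refine (connected_iff_exists_forall_reachable _).2 ⟨⟨_, hr₀'⟩, ?_⟩
    rintro ⟨v, hv⟩
    obtain ⟨x, rfl⟩ | ⟨p, rfl⟩ := exists_nsEmb_eq_or_eq_path v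
    · have hmaps : Set.MapsTo (nsEmb V₀ V₁ j) (D : Set _) (stretch j D : Set _) :=
        fun x hx => nsEmb_mem_stretch.2 hx
      refine (hD.2.1.preconnected ⟨_, hr₀⟩ ⟨x, nsEmb_mem_stretch.1 hv⟩).lift hmaps.restrict ?_
      rintro ⟨u, hu⟩ ⟨w, hw⟩ huw
      rcases adj_nsEmb_or_roots (j := j) (induce_adj.1 huw) with h | ⟨rfl, rfl⟩ | ⟨rfl, rfl⟩
      · exact (induce_adj.2 h).reachable
      · exact hroots
      · exact hroots.symm
    · simpa [spine_succ_of_lt p.2] using reachable_spine hspine (i := p + 1) (by omega)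
  · obtain ⟨x, rfl⟩ | ⟨p, rfl⟩ := exists_nsEmb_eq_or_eq_path v
    · rcases hD.2.2 x with hx | ⟨u, hu, hux⟩
      · exact .inl (nsEmb_mem_stretch.2 hx)
      · rcases adj_nsEmb_or_roots (j := j) hux with h | ⟨-, rfl⟩ | ⟨-, rfl⟩
        · exact .inr ⟨_, nsEmb_mem_stretch.2 hu, h⟩
        · exact .inl (nsEmb_mem_stretch.2 hr₁)
        · exact .inl (nsEmb_mem_stretch.2 hr₀)
    · exact .inl (path_mem_stretch D p)

end Nontrivial

end NeckStretch

theorem neck_stretch_connected_dominating_general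
    {V₀ V₁ : Type*} [Fintype V₀] [Fintype V₁] [DecidableEq V₀] [DecidableEq V₁]
    (G₀ : SimpleGraph V₀) (G₁ : SimpleGraph V₁) (r₀ : V₀) (r₁ : V₁)
    (hV₀ : 2 ≤ Fintype.card V₀) (hV₁ : 2 ≤ Fintype.card V₁)
    (k : ℕ) :
    (∀ D : Finset (V₀ ⊕ V₁ ⊕ Fin (k - 1)),
      ConnDomSet (nsGraph G₀ G₁ r₀ r₁ (k - 1)) D →
        (∀ p : Fin (k - 1), Sum.inr (Sum.inr p) ∈ D) ∧
        Sum.inl r₀ ∈ D ∧ Sum.inr (Sum.inl r₁) ∈ D) ∧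
    (Set.BijOn
      (fun D : Finset (V₀ ⊕ V₁ ⊕ Fin 0) =>
        D.map (nsEmb V₀ V₁ (k - 1)) ∪
          Finset.univ.image (fun p : Fin (k - 1) => Sum.inr (Sum.inr p)))
      {D | ConnDomSet (nsGraph G₀ G₁ r₀ r₁ 0) D}
      {D | ConnDomSet (nsGraph G₀ G₁ r₀ r₁ (k - 1)) D}) ∧
    (∀ D : Finset (V₀ ⊕ V₁ ⊕ Fin 0), ConnDomSet (nsGraph G₀ G₁ r₀ r₁ 0) D →
      (D.map (nsEmb V₀ V₁ (k - 1)) ∪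
        Finset.univ.image (fun p : Fin (k - 1) => Sum.inr (Sum.inr p))).card =
        D.card + (k - 1)) ∧
    (∑ D : Finset (V₀ ⊕ V₁ ⊕ Fin (k - 1)),
        if ConnDomSet (nsGraph G₀ G₁ r₀ r₁ (k - 1)) D then
          (-1 : ℤ) ^ D.card else 0) =
      (-1 : ℤ) ^ (k - 1) *
        ∑ D : Finset (V₀ ⊕ V₁ ⊕ Fin 0),
          if ConnDomSet (nsGraph G₀ G₁ r₀ r₁ 0) D then (-1 : ℤ) ^ D.card
          else 0 := by
  have : Nontrivial V₀ := Fintype.one_lt_card_iff_nontrivial.1 hV₀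
  have : Nontrivial V₁ := Fintype.one_lt_card_iff_nontrivial.1 hV₁
  have hbij : Set.BijOn (NeckStretch.stretch (k - 1))
      {D | ConnDomSet (nsGraph G₀ G₁ r₀ r₁ 0) D}
      {D | ConnDomSet (nsGraph G₀ G₁ r₀ r₁ (k - 1)) D} :=
    ⟨fun _ => NeckStretch.connDomSet_stretch, NeckStretch.stretch_injective.injOn, fun _ hD' =>
      ⟨_, NeckStretch.connDomSet_preimage_nsEmb hD',
        NeckStretch.stretch_preimage (NeckStretch.neck_subset_of_connDomSet hD').1⟩⟩
  refine ⟨fun _ => NeckStretch.neck_subset_of_connDomSet, hbij,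
    fun D _ => NeckStretch.card_stretch D, ?_⟩
  simp only [Finset.mul_sum, mul_ite, mul_zero]
  refine (Finset.sum_ite_eq_of_bijOn _ hbij fun D _ => ?_).symm
  rw [NeckStretch.card_stretch, pow_add, mul_comm]

/-- Neck-stretching: every connected dominating set of `NS(G₀,G₁,k)` contains
the internal path vertices and both roots; adding the internal vertices is a
bijection from connected dominating sets of `NS(G₀,G₁,1)` to those of
`NS(G₀,G₁,k)` shifting cardinality by `k - 1`; consequently
`D^c_{NS(G₀,G₁,k)}(-1) = (-1)^{k-1} · D^c_{NS(G₀,G₁,1)}(-1)`. -/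
theorem neck_stretch_connected_dominating
    {V₀ V₁ : Type*} [Fintype V₀] [Fintype V₁] [DecidableEq V₀] [DecidableEq V₁]
    (G₀ : SimpleGraph V₀) (G₁ : SimpleGraph V₁) (r₀ : V₀) (r₁ : V₁)
    (hG₀ : G₀.Connected) (hG₁ : G₁.Connected)
    (hV₀ : 2 ≤ Fintype.card V₀) (hV₁ : 2 ≤ Fintype.card V₁)
    (k : ℕ) (hk : 1 ≤ k) :
    (∀ D : Finset (V₀ ⊕ V₁ ⊕ Fin (k - 1)),
      ConnDomSet (nsGraph G₀ G₁ r₀ r₁ (k - 1)) D →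
        (∀ p : Fin (k - 1), Sum.inr (Sum.inr p) ∈ D) ∧
        Sum.inl r₀ ∈ D ∧ Sum.inr (Sum.inl r₁) ∈ D) ∧
    (Set.BijOn
      (fun D : Finset (V₀ ⊕ V₁ ⊕ Fin 0) =>
        D.map (nsEmb V₀ V₁ (k - 1)) ∪
          Finset.univ.image (fun p : Fin (k - 1) => Sum.inr (Sum.inr p)))
      {D | ConnDomSet (nsGraph G₀ G₁ r₀ r₁ 0) D}
      {D | ConnDomSet (nsGraph G₀ G₁ r₀ r₁ (k - 1)) D}) ∧
    (∀ D : Finset (V₀ ⊕ V₁ ⊕ Fin 0), ConnDomSet (nsGraph G₀ G₁ r₀ r₁ 0) D →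
      (D.map (nsEmb V₀ V₁ (k - 1)) ∪
        Finset.univ.image (fun p : Fin (k - 1) => Sum.inr (Sum.inr p))).card =
        D.card + (k - 1)) ∧
    (∑ D : Finset (V₀ ⊕ V₁ ⊕ Fin (k - 1)),
        if ConnDomSet (nsGraph G₀ G₁ r₀ r₁ (k - 1)) D then
          (-1 : ℤ) ^ D.card else 0) =
      (-1 : ℤ) ^ (k - 1) *
        ∑ D : Finset (V₀ ⊕ V₁ ⊕ Fin 0),
          if ConnDomSet (nsGraph G₀ G₁ r₀ r₁ 0) D then (-1 : ℤ) ^ D.card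
          else 0 :=
  neck_stretch_connected_dominating_general G₀ G₁ r₀ r₁ hV₀ hV₁ k
end

section
/- Let G be a finite simple connected graph with a universal vertex v̂ (adjacent to all other vertices), and suppose G has at least 2 vertices. Then D^c_G(-1) = D^c_{G - v̂}(-1) if G - v̂ is connected; more precisely, the signed count over connected dominating sets of G containing v̂ is Σ_{S ⊆ V(G)\{v̂}} (-1)^{|S|+1} = 0, so D^c_G(-1) equals the signed count over connected dominating sets of G avoiding v̂, which are exactly the connected dominating sets of G − v̂ that also dominate v̂ — and since v̂ is adjacent to everything, these are exactly the connected dominating sets of G − v̂. -/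
open Finset

attribute [local instance] Classical.propDecidable

/-! Every set containing the universal vertex `v̂` is a connected dominating set, so the signed
count over those sets is `∑_{S ⊆ V ∖ {v̂}} (-1)^(|S|+1)`, which vanishes because `V ∖ {v̂}` is
nonempty. A set avoiding `v̂` induces the same graph in `G` as in `G − v̂`, and, if nonempty, it
dominates `v̂` automatically. -/

namespace SimpleGraph

variable {V : Type*} (G : SimpleGraph V)

def induceInduceIso (s : Set V) (t : Set s) :
    (G.induce s).induce t ≃g G.induce (Subtype.val '' t) where
  toEquiv := (Equiv.subtypeSubtypeEquivSubtypeExists _ _).trans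
    (Equiv.subtypeEquivRight fun v => by simp [Subtype.coe_image])
  map_rel_iff' := Iff.rfl

variable {G}

lemma IsUniversal.induce {s : Set V} {v : s} (h : G.IsUniversal v) :
    (G.induce s).IsUniversal v :=
  fun _ hw => h (Subtype.coe_injective.ne hw)

end SimpleGraph

open SimpleGraph

section ConnDomSet

variable {V : Type*} {G : SimpleGraph V}

lemma ConnDomSet.of_isUniversal_mem {v : V} {D : Finset V} (hv : G.IsUniversal v) (hD : v ∈ D) :
    ConnDomSet G D :=
  ⟨⟨v, hD⟩, Connected.of_isUniversal (v := ⟨v, hD⟩) hv.induce,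
    fun w => (eq_or_ne v w).elim (fun h => .inl (h ▸ hD)) fun h => .inr ⟨v, hD, hv h⟩⟩

lemma dominates_map_subtype_iff {s : Set V} (D : Finset s) :
    (∀ v, v ∈ D.map (Function.Embedding.subtype _) ∨
        ∃ u ∈ D.map (Function.Embedding.subtype _), G.Adj u v) ↔
      (∀ v : s, v ∈ D ∨ ∃ u ∈ D, (G.induce s).Adj u v) ∧ ∀ v ∉ s, ∃ u ∈ D, G.Adj u v := by
  simp only [Finset.mem_map, Function.Embedding.coe_subtype, exists_exists_and_eq_and,
    comap_adj]
  constructor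
  · intro h
    refine ⟨fun v => (h v).imp (fun ⟨u, hu, huv⟩ => Subtype.ext huv ▸ hu) id, fun v hv => ?_⟩
    exact (h v).resolve_left fun ⟨u, _, huv⟩ => hv (huv ▸ u.2)
  · rintro ⟨hin, hout⟩ v
    by_cases hv : v ∈ s
    · exact (hin ⟨v, hv⟩).imp (fun h => ⟨_, h, rfl⟩) id
    · exact .inr (hout v hv)

lemma connDomSet_map_subtype_iff {s : Set V} (D : Finset s) :
    ConnDomSet G (D.map (Function.Embedding.subtype _)) ↔
      ConnDomSet (G.induce s) D ∧ ∀ v ∉ s, ∃ u ∈ D, G.Adj u v := by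
  have hconn : (G.induce (D.map (Function.Embedding.subtype _) : Set V)).Connected ↔
      ((G.induce s).induce (D : Set s)).Connected := by
    rw [Finset.coe_map]
    exact (G.induceInduceIso s D).connected_iff.symm
  rw [ConnDomSet, ConnDomSet, map_nonempty, hconn, dominates_map_subtype_iff, and_assoc,
    and_assoc]

end ConnDomSet

namespace Finset

lemma sum_ite_mem_neg_one_pow_card {α : Type*} [Fintype α] [DecidableEq α] [Nontrivial α]
    (a : α) : ∑ s : Finset α, (if a ∈ s then (-1 : ℤ) ^ #s else 0) = 0 := by
  obtain ⟨b, hb⟩ := exists_ne a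
  have ha : a ∉ univ.erase a := notMem_erase a _
  have hnot : ∀ t ∈ (univ.erase a).powerset, a ∉ t := fun t ht h => ha (mem_powerset.1 ht h)
  rw [← powerset_univ, ← insert_erase (mem_univ a), sum_powerset_insert ha,
    sum_eq_zero fun t ht => if_neg (hnot t ht), zero_add]
  calc ∑ t ∈ (univ.erase a).powerset, (if a ∈ insert a t then (-1 : ℤ) ^ #(insert a t) else 0)
      = (∑ t ∈ (univ.erase a).powerset, (-1 : ℤ) ^ #t) * -1 := by
        rw [sum_mul]
        refine sum_congr rfl fun t ht => ?_
        rw [if_pos (mem_insert_self a t), card_insert_of_notMem (hnot t ht), pow_succ]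
    _ = 0 := by
        rw [sum_powerset_neg_one_pow_card_of_nonempty ⟨b, mem_erase.2 ⟨hb, mem_univ b⟩⟩,
          zero_mul]

lemma sum_filter_coe_subset_eq_sum_map_subtype {V M : Type*} [Fintype V] [AddCommMonoid M]
    {s : Set V} [Fintype s] (f : Finset V → M) :
    ∑ D ∈ univ.filter (fun D : Finset V => ↑D ⊆ s), f D =
      ∑ E : Finset s, f (E.map (Function.Embedding.subtype _)) := by
  symm
  refine sum_nbij' (fun E => E.map (Function.Embedding.subtype _)) (fun D => D.subtype (· ∈ s))
    (fun E _ => mem_filter.2 ⟨mem_univ _, map_subtype_subset E⟩) (fun _ _ => mem_univ _)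
    (fun E _ => ?_) (fun D hD => subtype_map_of_mem (mem_filter.1 hD).2) (fun _ _ => rfl)
  ext v
  simp

lemma sum_eq_sum_filter_mem_add_sum_map_subtype {V M : Type*} [Fintype V]
    [DecidableEq V] [AddCommMonoid M] (a : V) (f : Finset V → M) :
    ∑ D, f D = ∑ D ∈ univ.filter (a ∈ ·), f D +
      ∑ E : Finset {v : V | v ≠ a}, f (E.map (Function.Embedding.subtype _)) := by
  rw [← sum_filter_add_sum_filter_not univ (a ∈ ·), ← sum_filter_coe_subset_eq_sum_map_subtype]
  congr 2
  ext D
  simp [Set.subset_def]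

end Finset

theorem universal_vertex_deletion_general
    {V : Type*} [Fintype V] [DecidableEq V] (G : SimpleGraph V)
    (hcard : 2 ≤ Fintype.card V)
    (vhat : V) (huniv : ∀ u : V, u ≠ vhat → G.Adj vhat u) :
    (∑ D : Finset V,
        if ConnDomSet G D ∧ vhat ∈ D then (-1 : ℤ) ^ D.card else 0) = 0 ∧
    (∀ D : Finset {v : V | v ≠ vhat},
      ConnDomSet (G.induce {v : V | v ≠ vhat}) D ↔
        ConnDomSet G (D.map (Function.Embedding.subtype _))) ∧
    (∑ D : Finset V, if ConnDomSet G D then (-1 : ℤ) ^ D.card else 0) =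
      ∑ D : Finset {v : V | v ≠ vhat},
        if ConnDomSet (G.induce {v : V | v ≠ vhat}) D then (-1 : ℤ) ^ D.card
        else 0 := by
  have hvhat : G.IsUniversal vhat := fun u hu => huniv u hu.symm
  have : Nontrivial V := Fintype.one_lt_card_iff_nontrivial.1 hcard
  have hcontaining : (∑ D : Finset V,
      if ConnDomSet G D ∧ vhat ∈ D then (-1 : ℤ) ^ #D else 0) = 0 := by
    simp_rw [and_iff_right_of_imp (ConnDomSet.of_isUniversal_mem hvhat)]
    exact sum_ite_mem_neg_one_pow_card vhat
  have hdeleted (D : Finset {v : V | v ≠ vhat}) :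
      ConnDomSet (G.induce {v : V | v ≠ vhat}) D ↔
        ConnDomSet G (D.map (Function.Embedding.subtype _)) := by
    rw [connDomSet_map_subtype_iff, iff_self_and]
    rintro ⟨⟨u, hu⟩, -⟩ v hv
    obtain rfl : v = vhat := not_not.1 hv
    exact ⟨u, hu, (hvhat u.2.symm).symm⟩
  refine ⟨hcontaining, hdeleted, ?_⟩
  rw [sum_eq_sum_filter_mem_add_sum_map_subtype vhat, sum_filter]
  simp_rw [← ite_and, and_comm (a := vhat ∈ _), hcontaining, zero_add, hdeleted, card_map]

/-- Let `v̂` be a universal vertex of the connected graph `G` (at least two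
vertices) and suppose `G − v̂` is connected.  The signed count over connected
dominating sets containing `v̂` vanishes; a subset avoiding `v̂` is a connected
dominating set of `G` iff it is one of `G − v̂`; hence
`D^c_G(-1) = D^c_{G − v̂}(-1)`. -/
theorem universal_vertex_deletion
    {V : Type*} [Fintype V] [DecidableEq V] (G : SimpleGraph V)
    (hconn : G.Connected) (hcard : 2 ≤ Fintype.card V)
    (vhat : V) (huniv : ∀ u : V, u ≠ vhat → G.Adj vhat u)
    (hdel : (G.induce {v : V | v ≠ vhat}).Connected) :
    (∑ D : Finset V,
        if ConnDomSet G D ∧ vhat ∈ D then (-1 : ℤ) ^ D.card else 0) = 0 ∧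
    (∀ D : Finset {v : V | v ≠ vhat},
      ConnDomSet (G.induce {v : V | v ≠ vhat}) D ↔
        ConnDomSet G (D.map (Function.Embedding.subtype _))) ∧
    (∑ D : Finset V, if ConnDomSet G D then (-1 : ℤ) ^ D.card else 0) =
      ∑ D : Finset {v : V | v ≠ vhat},
        if ConnDomSet (G.induce {v : V | v ≠ vhat}) D then (-1 : ℤ) ^ D.card
        else 0 :=
  universal_vertex_deletion_general G hcard vhat huniv
end
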